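/- arXiv:2209.03709 — 5 statements merged into one kernel-verified Lean document; each statement's English description precedes it below -/
import Mathlib

section
/- Let G be a finite simple graph and let λ be a complex number. Then λ is an eigenvalue of the 3-power hypergraph G^(3) if and only if there exists a signed induced subgraph of G having an eigenvalue β with β² = λ³. -/
open Finset

/-- `(lam, x)` is an eigenpair of the `k`-uniform hypergraph with hyperedge set `E`:
`x` is nonzero and for every vertex `i`,
`lam * x i ^ (k-1) = ∑_{e ∈ E, i ∈ e} ∏_{v ∈ e \ {i}} x v`. -/
def IsHypergraphEigenpair {W : Type*} [Fintype W] [DecidableEq W]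
    (k : ℕ) (E : Finset (Finset W)) (lam : ℂ) (x : W → ℂ) : Prop :=
  x ≠ 0 ∧ ∀ i : W, lam * x i ^ (k - 1) =
    ∑ e ∈ E.filter (fun e => i ∈ e), ∏ v ∈ e.erase i, x v

/-- `lam` is an eigenvalue of the `k`-uniform hypergraph with hyperedge set `E`. -/
def IsHypergraphEigenvalue {W : Type*} [Fintype W] [DecidableEq W]
    (k : ℕ) (E : Finset (Finset W)) (lam : ℂ) : Prop :=
  ∃ x, IsHypergraphEigenpair k E lam x

/-- The hyperedge of the `k`-power hypergraph `G^(k)` corresponding to the edge `e` of `G`: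
it consists of the two endpoints of `e` together with the `k - 2` added vertices on `e`. -/
def powerEdge {V : Type*} [Fintype V] [DecidableEq V] (G : SimpleGraph V) [DecidableRel G.Adj]
    (k : ℕ) (e : G.edgeSet) : Finset (V ⊕ (G.edgeSet × Fin (k - 2))) :=
  Finset.univ.filter (fun v =>
    (∃ i, v = Sum.inl i ∧ i ∈ (e : Sym2 V)) ∨ ∃ t, v = Sum.inr (e, t))

/-- The hyperedge set of the `k`-power hypergraph `G^(k)`, whose vertices are the vertices of `G`
(`Sum.inl`) together with `k - 2` new vertices for each edge of `G` (`Sum.inr`). -/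
def powerEdges {V : Type*} [Fintype V] [DecidableEq V] (G : SimpleGraph V) [DecidableRel G.Adj]
    (k : ℕ) : Finset (Finset (V ⊕ (G.edgeSet × Fin (k - 2)))) :=
  Finset.univ.image (powerEdge G k)

/-!
A vector on the vertices of `G^(3)` is a pair `(u, w)`: a value `u i` at each vertex `i` of `G`
and a value `w {i, j}` at the new vertex of each edge. Its eigen-equations read
`λ u_i² = ∑_{j ~ i} w_{ij} u_j` and `λ w_{ij}² = u_i u_j`.
For `λ = c² ≠ 0` write `u_i = s_i²`. The second equation says exactly that
`π_{ij} = c w_{ij} / (s_i s_j)` is a sign on the support `S` of `s`, and the first one then becomes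
`∑_j π_{ij} s_j³ = c³ s_i³`: `s³` is an eigenvector of the signing `π` of `G[S]` with eigenvalue
`β = c³`, and `β² = λ³`. Conversely, from such an eigenvector `y` take `s = y^{1/3}`, `c = β / λ`
and `w_{ij} = π_{ij} s_i s_j / c`. For `λ = 0` both sides only say that `G` has a vertex.
-/

open Matrix

lemma Matrix.submatrix_mulVec_of_forall_notMem_eq_zero {κ m ι R : Type*} [Fintype ι]
    [NonUnitalNonAssocSemiring R] (M : Matrix m ι R) (r : κ → m) {S : Finset ι} {f : ι → R}
    (hf : ∀ j ∉ S, f j = 0) :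
    M.submatrix r (↑) *ᵥ (fun j : S => f j) = fun i => (M *ᵥ f) (r i) := by
  ext i
  simp only [mulVec, dotProduct, submatrix_apply]
  rw [Finset.sum_coe_sort S fun j => M (r i) j * f j]
  exact Finset.sum_subset (Finset.subset_univ S) fun j _ hj => by rw [hf j hj, mul_zero]

lemma exists_sq_eq_and_pow_three_eq {K : Type*} [Field K] {lam β : K} (hlam : lam ≠ 0)
    (h : β ^ 2 = lam ^ 3) : ∃ c, c ^ 2 = lam ∧ c ^ 3 = β := by
  have hβ : β ≠ 0 := by
    rintro rfl
    exact hlam (pow_eq_zero_iff three_ne_zero |>.1 (by rw [← h]; ring))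
  refine ⟨β / lam, ?_, ?_⟩
  · rw [div_pow, h]
    field_simp
  · rw [div_pow, ← h, pow_succ, mul_div_cancel_left₀ _ (pow_ne_zero 2 hβ)]

lemma Finset.exists_extend_by_zero_pow_eq {K ι : Type*} [Field K] [IsAlgClosed K]
    {S : Finset ι} (y : S → K) {n : ℕ} (hn : n ≠ 0) :
    ∃ s : ι → K, (∀ i ∉ S, s i = 0) ∧ (fun j : S => s j ^ n) = y := by
  classical
  choose s hs using fun i => IsAlgClosed.exists_pow_nat_eq (if h : i ∈ S then y ⟨i, h⟩ else 0)
    (Nat.pos_of_ne_zero hn)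
  refine ⟨s, fun i hi => pow_eq_zero_iff hn |>.1 (by rw [hs i, dif_neg hi]), funext fun j => ?_⟩
  rw [hs, dif_pos j.2]

namespace SimpleGraph

variable {V : Type*} (G : SimpleGraph V)

lemma exists_adj_of_mem_edgeSet {e : Sym2 V} (he : e ∈ G.edgeSet) :
    ∃ a b, G.Adj a b ∧ e = s(a, b) := by
  induction e using Sym2.ind with
  | h a b => exact ⟨a, b, he, rfl⟩

lemma exists_sign_mul_eq_of_sq_eq {c : ℂ} (hc : c ≠ 0) {s : V → ℂ} {w : Sym2 V → ℂ}
    (he : ∀ a b, G.Adj a b → c ^ 2 * w s(a, b) ^ 2 = s a ^ 2 * s b ^ 2) :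
    ∃ π : Sym2 V → ℂ, (∀ a b, G.Adj a b → c * w s(a, b) = π s(a, b) * (s a * s b)) ∧
      ∀ a b, G.Adj a b → s a ≠ 0 → s b ≠ 0 → π s(a, b) = 1 ∨ π s(a, b) = -1 := by
  set π : Sym2 V → ℂ := fun q =>
    c * w q / Sym2.lift ⟨fun a b => s a * s b, fun _ _ => mul_comm _ _⟩ q
  have hw : ∀ a b, G.Adj a b → c * w s(a, b) = π s(a, b) * (s a * s b) := by
    intro a b hab
    by_cases hs0 : s a * s b = 0
    · have h2 : (c * w s(a, b)) ^ 2 = (s a * s b) ^ 2 := by linear_combination he a b hab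
      rw [hs0, (by simpa [hs0, hc] using h2 : w s(a, b) = 0)]
      ring
    · exact (div_mul_cancel₀ _ hs0).symm
  refine ⟨π, hw, fun a b hab ha hb => sq_eq_one_iff.1 ?_⟩
  refine mul_right_cancel₀ (pow_ne_zero 2 (mul_ne_zero ha hb)) ?_
  linear_combination he a b hab - (c * w s(a, b) + π s(a, b) * (s a * s b)) * hw a b hab

section SignedInducedSubgraph

variable [DecidableRel G.Adj]

def weightedAdjMatrix (w : Sym2 V → ℂ) : Matrix V V ℂ :=
  Matrix.of fun i j => if G.Adj i j then w s(i, j) else 0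

def IsSigning (S : Finset V) (π : Sym2 V → ℂ) : Prop :=
  ∀ i j, i ∈ S → j ∈ S → G.Adj i j → π s(i, j) = 1 ∨ π s(i, j) = -1

lemma exists_signedInducedEigenpair_zero [Nonempty V] :
    ∃ (S : Finset V) (π : Sym2 V → ℂ), G.IsSigning S π ∧ ∃ (β : ℂ) (y : S → ℂ),
      β ^ 2 = 0 ^ 3 ∧ y ≠ 0 ∧ (G.weightedAdjMatrix π).submatrix (↑) (↑) *ᵥ y = β • y := by
  obtain ⟨v⟩ := ‹Nonempty V›
  have hv : ∀ i j : ({v} : Finset V), ¬G.Adj i j := fun i j => by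
    rw [Finset.mem_singleton.1 i.2, Finset.mem_singleton.1 j.2]
    exact G.irrefl
  refine ⟨{v}, 1, fun _ _ _ _ _ => .inl rfl, 0, 1, by ring, one_ne_zero, ?_⟩
  ext i
  simp [mulVec, dotProduct, weightedAdjMatrix, hv]

variable [Fintype V]

lemma weightedAdjMatrix_mulVec_apply (w : Sym2 V → ℂ) (u : V → ℂ) (i : V) :
    (G.weightedAdjMatrix w *ᵥ u) i = ∑ j ∈ G.neighborFinset i, w s(i, j) * u j := by
  simp [weightedAdjMatrix, mulVec, dotProduct, ite_mul, Finset.sum_ite,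
    neighborFinset_eq_filter]

lemma weightedAdjMatrix_mulVec_sq {c : ℂ} {s : V → ℂ} {π w : Sym2 V → ℂ}
    (hw : ∀ a b, G.Adj a b → c * w s(a, b) = π s(a, b) * (s a * s b)) (i : V) :
    c * (G.weightedAdjMatrix w *ᵥ fun j => s j ^ 2) i =
      s i * (G.weightedAdjMatrix π *ᵥ fun j => s j ^ 3) i := by
  simp only [weightedAdjMatrix_mulVec_apply, Finset.mul_sum]
  refine Finset.sum_congr rfl fun j hj => ?_
  rw [← mul_assoc, hw i j ((G.mem_neighborFinset i j).1 hj)]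
  ring

lemma exists_signedInducedEigenpair_of_powerEquations {lam : ℂ} (hlam : lam ≠ 0) {u : V → ℂ}
    (hu : u ≠ 0) {w : Sym2 V → ℂ} (hv : ∀ i, lam * u i ^ 2 = (G.weightedAdjMatrix w *ᵥ u) i)
    (he : ∀ a b, G.Adj a b → lam * w s(a, b) ^ 2 = u a * u b) :
    ∃ (S : Finset V) (π : Sym2 V → ℂ), G.IsSigning S π ∧ ∃ (β : ℂ) (y : S → ℂ),
      β ^ 2 = lam ^ 3 ∧ y ≠ 0 ∧ (G.weightedAdjMatrix π).submatrix (↑) (↑) *ᵥ y = β • y := by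
  obtain ⟨c, rfl⟩ := IsAlgClosed.exists_pow_nat_eq lam two_pos
  choose s hs using fun i => IsAlgClosed.exists_pow_nat_eq (u i) two_pos
  obtain rfl : u = fun i => s i ^ 2 := funext fun i => (hs i).symm
  have hc : c ≠ 0 := by rintro rfl; simp at hlam
  obtain ⟨π, hw, hπ⟩ := G.exists_sign_mul_eq_of_sq_eq hc he
  refine ⟨Finset.univ.filter (s · ≠ 0), π, fun a b ha hb hab => ?_, c ^ 3, fun j => s j ^ 3,
    by ring, ?_, ?_⟩
  · exact hπ a b hab (Finset.mem_filter.1 ha).2 (Finset.mem_filter.1 hb).2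
  · obtain ⟨i, hi⟩ := Function.ne_iff.1 hu
    have hsi : s i ≠ 0 := fun h => hi (by simp [h])
    refine Function.ne_iff.2 ⟨⟨i, Finset.mem_filter.2 ⟨Finset.mem_univ i, hsi⟩⟩, ?_⟩
    simpa using hsi
  · rw [Matrix.submatrix_mulVec_of_forall_notMem_eq_zero _ _ (f := fun j => s j ^ 3)
      fun j hj => by simpa using hj]
    ext ⟨i, hi⟩
    refine mul_left_cancel₀ (Finset.mem_filter.1 hi).2 ?_
    simp only [Pi.smul_apply, smul_eq_mul]
    linear_combination -G.weightedAdjMatrix_mulVec_sq hw i - c * hv i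

lemma exists_powerEquations_of_signedInducedEigenpair {lam : ℂ} (hlam : lam ≠ 0) {S : Finset V}
    {π : Sym2 V → ℂ} (hπ : G.IsSigning S π) {β : ℂ} {y : S → ℂ} (hβ : β ^ 2 = lam ^ 3) (hy : y ≠ 0)
    (hAy : (G.weightedAdjMatrix π).submatrix (↑) (↑) *ᵥ y = β • y) :
    ∃ u : V → ℂ, u ≠ 0 ∧ ∃ w, (∀ i, lam * u i ^ 2 = (G.weightedAdjMatrix w *ᵥ u) i) ∧
      ∀ a b, G.Adj a b → lam * w s(a, b) ^ 2 = u a * u b := by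
  obtain ⟨c, rfl, rfl⟩ := exists_sq_eq_and_pow_three_eq hlam hβ
  have hc0 : c ≠ 0 := by rintro rfl; simp at hlam
  obtain ⟨s, hsS, rfl⟩ := Finset.exists_extend_by_zero_pow_eq y three_ne_zero
  have hS : ∀ i, s i * (G.weightedAdjMatrix π *ᵥ fun j => s j ^ 3) i = c ^ 3 * s i ^ 4 := by
    intro i
    by_cases hi : i ∈ S
    · have hAyi := congrFun hAy ⟨i, hi⟩
      rw [Matrix.submatrix_mulVec_of_forall_notMem_eq_zero _ _ (f := fun j => s j ^ 3)
        fun j hj => by simp [hsS j hj]] at hAyi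
      simp only [Pi.smul_apply, smul_eq_mul] at hAyi
      rw [hAyi]
      ring
    · simp [hsS i hi]
  set w : Sym2 V → ℂ := fun q =>
    π q * Sym2.lift ⟨fun a b => s a * s b, fun _ _ => mul_comm _ _⟩ q / c
  have hw : ∀ a b, G.Adj a b → c * w s(a, b) = π s(a, b) * (s a * s b) := fun a b _ => by
    simp only [w, Sym2.lift_mk]
    exact mul_div_cancel₀ _ hc0
  refine ⟨fun i => s i ^ 2, ?_, w, fun i => ?_, fun a b hab => ?_⟩
  · obtain ⟨j, hj⟩ := Function.ne_iff.1 hy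
    exact Function.ne_iff.2 ⟨j, by simpa using hj⟩
  · refine mul_left_cancel₀ hc0 ?_
    linear_combination -G.weightedAdjMatrix_mulVec_sq hw i - hS i
  · have hσ : π s(a, b) ^ 2 * (s a * s b) ^ 2 = (s a * s b) ^ 2 := by
      by_cases hab' : a ∈ S ∧ b ∈ S
      · rw [sq_eq_one_iff.2 (hπ a b hab'.1 hab'.2 hab), one_mul]
      · obtain ha | hb := not_and_or.1 hab' <;> simp [hsS _ ‹_›]
    linear_combination (c * w s(a, b) + π s(a, b) * (s a * s b)) * hw a b hab + hσ

end SignedInducedSubgraph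

section PowerHypergraph

instance : Subsingleton (Fin (3 - 2)) := inferInstanceAs (Subsingleton (Fin 1))

def powerVector (u : V → ℂ) (w : Sym2 V → ℂ) : V ⊕ (G.edgeSet × Fin (3 - 2)) → ℂ :=
  Sum.elim u fun p => w p.1

lemma exists_powerVector_eq (x : V ⊕ (G.edgeSet × Fin (3 - 2)) → ℂ) :
    ∃ u w, G.powerVector u w = x := by
  classical
  refine ⟨x ∘ Sum.inl, fun e => if h : e ∈ G.edgeSet then x (.inr (⟨e, h⟩, ⟨0, by omega⟩)) else 0,
    funext ?_⟩
  rintro (i | ⟨e, t⟩)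
  · rfl
  · simp [powerVector, Subsingleton.elim t ⟨0, by omega⟩]

lemma powerVector_ne_zero_iff {lam : ℂ} (hlam : lam ≠ 0) {u : V → ℂ} {w : Sym2 V → ℂ}
    (he : ∀ a b, G.Adj a b → lam * w s(a, b) ^ 2 = u a * u b) :
    G.powerVector u w ≠ 0 ↔ u ≠ 0 := by
  refine ⟨?_, fun hu hx => hu (funext fun i => congrFun hx (.inl i))⟩
  rintro hx rfl
  refine hx (funext ?_)
  rintro (i | ⟨e, t⟩)
  · rfl
  · obtain ⟨a, b, hab, he'⟩ := G.exists_adj_of_mem_edgeSet e.2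
    show w e = 0
    simpa [he', hlam] using he a b hab

variable [Fintype V] [DecidableEq V] [DecidableRel G.Adj]

lemma inl_mem_powerEdge {k : ℕ} {e : G.edgeSet} {i : V} :
    Sum.inl i ∈ powerEdge G k e ↔ i ∈ (e : Sym2 V) := by
  simp [powerEdge]

lemma inr_mem_powerEdge {k : ℕ} {e e' : G.edgeSet} {t : Fin (k - 2)} :
    Sum.inr (e', t) ∈ powerEdge G k e ↔ e' = e := by
  simp [powerEdge]

lemma powerEdge_injective (k : ℕ) : Function.Injective (powerEdge G k) := fun e e' h =>
  Subtype.ext <| Sym2.ext fun i => by rw [← inl_mem_powerEdge, h, inl_mem_powerEdge]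

lemma powerEdge_three {e : G.edgeSet} {a b : V} (hab : (e : Sym2 V) = s(a, b)) (t : Fin (3 - 2)) :
    powerEdge G 3 e = {Sum.inr (e, t), Sum.inl a, Sum.inl b} := by
  ext (i | ⟨e', t'⟩)
  · rw [inl_mem_powerEdge, hab]
    simp
  · rw [inr_mem_powerEdge, Subsingleton.elim t' t]
    simp

lemma sum_powerEdges_inr (x : V ⊕ (G.edgeSet × Fin (3 - 2)) → ℂ) {e : G.edgeSet} {a b : V}
    (hab : (e : Sym2 V) = s(a, b)) (t : Fin (3 - 2)) :
    ∑ E ∈ (powerEdges G 3).filter (Sum.inr (e, t) ∈ ·), ∏ v ∈ E.erase (Sum.inr (e, t)), x v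
      = x (.inl a) * x (.inl b) := by
  have hne : a ≠ b := G.ne_of_adj (G.mem_edgeSet.1 (hab ▸ e.2))
  simp only [powerEdges, Finset.filter_image, inr_mem_powerEdge, Finset.filter_eq,
    Finset.mem_univ, if_true, Finset.image_singleton, Finset.sum_singleton, G.powerEdge_three hab t]
  rw [Finset.erase_insert (by simp), Finset.prod_pair (by simpa using hne)]

lemma sum_powerEdges_inl (u : V → ℂ) (w : Sym2 V → ℂ) (i : V) :
    ∑ E ∈ (powerEdges G 3).filter (Sum.inl i ∈ ·), ∏ v ∈ E.erase (Sum.inl i), G.powerVector u w v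
      = (G.weightedAdjMatrix w *ᵥ u) i := by
  simp only [powerEdges, Finset.filter_image, inl_mem_powerEdge,
    Finset.sum_image fun _ _ _ _ h => powerEdge_injective G 3 h, weightedAdjMatrix_mulVec_apply]
  symm
  refine Finset.sum_bij (fun j hj => ⟨s(i, j), (G.mem_neighborFinset i j).1 hj⟩) ?_ ?_ ?_ ?_
  · simp
  · exact fun j _ j' _ h => Sym2.congr_right.1 (congrArg Subtype.val h)
  · rintro ⟨e, he⟩ hi
    obtain ⟨j, rfl⟩ := Sym2.mem_iff_exists.1 (Finset.mem_filter.1 hi).2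
    exact ⟨j, by simpa using he, rfl⟩
  · intro j hj
    have hij : i ≠ j := (G.mem_neighborFinset i j).1 hj |>.ne
    rw [G.powerEdge_three rfl ⟨0, by omega⟩, Finset.erase_insert_of_ne (by simp),
      Finset.erase_insert (by simpa using hij), Finset.prod_pair (by simp)]
    rfl

lemma isHypergraphEigenpair_powerVector_iff (lam : ℂ) (u : V → ℂ) (w : Sym2 V → ℂ) :
    IsHypergraphEigenpair 3 (powerEdges G 3) lam (G.powerVector u w) ↔
      G.powerVector u w ≠ 0 ∧ (∀ i, lam * u i ^ 2 = (G.weightedAdjMatrix w *ᵥ u) i) ∧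
        ∀ a b, G.Adj a b → lam * w s(a, b) ^ 2 = u a * u b := by
  refine and_congr_right fun _ => ⟨fun h => ⟨fun i => ?_, fun a b hab => ?_⟩, fun h => ?_⟩
  · have hi := h (.inl i)
    rwa [sum_powerEdges_inl] at hi
  · have he := h (.inr (⟨s(a, b), hab⟩, ⟨0, by omega⟩))
    rwa [sum_powerEdges_inr G _ rfl] at he
  · rintro (i | ⟨e, t⟩)
    · rw [sum_powerEdges_inl]
      exact h.1 i
    · obtain ⟨a, b, hab, he⟩ := G.exists_adj_of_mem_edgeSet e.2
      rw [sum_powerEdges_inr G _ he, powerVector, Sum.elim_inr, he]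
      exact h.2 a b hab

lemma isHypergraphEigenvalue_powerEdges_three_iff (lam : ℂ) :
    IsHypergraphEigenvalue 3 (powerEdges G 3) lam ↔
      ∃ u w, G.powerVector u w ≠ 0 ∧ (∀ i, lam * u i ^ 2 = (G.weightedAdjMatrix w *ᵥ u) i) ∧
        ∀ a b, G.Adj a b → lam * w s(a, b) ^ 2 = u a * u b := by
  refine ⟨fun ⟨x, hx⟩ => ?_,
    fun ⟨u, w, h⟩ => ⟨_, (G.isHypergraphEigenpair_powerVector_iff lam u w).2 h⟩⟩
  obtain ⟨u, w, rfl⟩ := G.exists_powerVector_eq x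
  exact ⟨u, w, (G.isHypergraphEigenpair_powerVector_iff lam u w).1 hx⟩

lemma isHypergraphEigenvalue_powerEdges_three_zero_iff :
    IsHypergraphEigenvalue 3 (powerEdges G 3) 0 ↔ Nonempty V := by
  rw [isHypergraphEigenvalue_powerEdges_three_iff]
  constructor
  · rintro ⟨u, w, hx, -⟩
    obtain ⟨i | ⟨e, -⟩, -⟩ := Function.ne_iff.1 hx
    · exact ⟨i⟩
    · obtain ⟨a, -⟩ := G.exists_adj_of_mem_edgeSet e.2
      exact ⟨a⟩
  · rintro ⟨v⟩
    refine ⟨Pi.single v 1, 0, fun h => by simpa [powerVector] using congrFun h (.inl v),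
      fun i => by simp [weightedAdjMatrix], fun a b hab => ?_⟩
    rcases eq_or_ne a v with rfl | hav
    · simp [hab.ne']
    · simp [Pi.single_apply, hav]

lemma isHypergraphEigenvalue_powerEdges_three_iff_of_ne_zero {lam : ℂ} (hlam : lam ≠ 0) :
    IsHypergraphEigenvalue 3 (powerEdges G 3) lam ↔
      ∃ u : V → ℂ, u ≠ 0 ∧ ∃ w, (∀ i, lam * u i ^ 2 = (G.weightedAdjMatrix w *ᵥ u) i) ∧
        ∀ a b, G.Adj a b → lam * w s(a, b) ^ 2 = u a * u b := by
  rw [isHypergraphEigenvalue_powerEdges_three_iff]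
  refine ⟨fun ⟨u, w, hx, hv, he⟩ => ⟨u, (G.powerVector_ne_zero_iff hlam he).1 hx, w, hv, he⟩,
    fun ⟨u, hu, w, hv, he⟩ => ⟨u, w, (G.powerVector_ne_zero_iff hlam he).2 hu, hv, he⟩⟩

end PowerHypergraph

end SimpleGraph

/-- **Theorem (k = 3).** A complex number `lam` is an eigenvalue of the 3-power hypergraph
`G^(3)` if and only if some signed induced subgraph of `G` (induced on a vertex set `S`, with
sign function `π` on its edges) has an eigenvalue `β` with `β² = lam³`. -/
theorem power_hypergraph_eigenvalue_iff_signed_induced_subgraph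
    {V : Type*} [Fintype V] [DecidableEq V] (G : SimpleGraph V) [DecidableRel G.Adj]
    (lam : ℂ) :
    IsHypergraphEigenvalue 3 (powerEdges G 3) lam ↔
      ∃ (S : Finset V) (π : Sym2 V → ℂ),
        (∀ i j : V, i ∈ S → j ∈ S → G.Adj i j → π s(i, j) = 1 ∨ π s(i, j) = -1) ∧
        ∃ (β : ℂ) (y : ↥S → ℂ), β ^ 2 = lam ^ 3 ∧ y ≠ 0 ∧
          Matrix.mulVec
            (Matrix.of fun i j : ↥S => if G.Adj ↑i ↑j then π s((i : V), (j : V)) else 0) y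
            = β • y := by
  rcases eq_or_ne lam 0 with rfl | hlam
  · rw [G.isHypergraphEigenvalue_powerEdges_three_zero_iff]
    refine ⟨fun _ => G.exists_signedInducedEigenpair_zero, ?_⟩
    rintro ⟨S, -, -, -, y, -, hy, -⟩
    obtain ⟨⟨v, -⟩, -⟩ := Function.ne_iff.1 hy
    exact ⟨v⟩
  · rw [G.isHypergraphEigenvalue_powerEdges_three_iff_of_ne_zero hlam]
    constructor
    · rintro ⟨u, hu, w, hv, he⟩
      exact G.exists_signedInducedEigenpair_of_powerEquations hlam hu hv he
    · rintro ⟨S, π, hπ, β, y, hβ, hy, hAy⟩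
      exact G.exists_powerEquations_of_signedInducedEigenpair hlam hπ hβ hy hAy
end

section
/- Let G be a finite simple graph, let k ≥ 4 be an integer, and let λ be a complex number. Then λ is an eigenvalue of the k-power hypergraph G^(k) if and only if there exists a signed subgraph of G having an eigenvalue β with β² = λ^k. -/
open Finset

set_option maxHeartbeats 1000000
section
set_option linter.unusedSectionVars false
namespace PowerAux

variable {V : Type*} [Fintype V] [DecidableEq V] {G : SimpleGraph V} [DecidableRel G.Adj] {k : ℕ}

lemma edge_endpoints (e : G.edgeSet) : ∃ a b : V, G.Adj a b ∧ (e : Sym2 V) = s(a, b) := by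
  obtain ⟨z, hz⟩ := e
  induction z using Sym2.ind with
  | _ a b => exact ⟨a, b, G.mem_edgeSet.1 hz, rfl⟩

lemma mem_powerEdge_inl {e : G.edgeSet} {v : V} :
    Sum.inl v ∈ powerEdge G k e ↔ v ∈ (e : Sym2 V) := by
  simp [powerEdge]

lemma mem_powerEdge_inr {e e' : G.edgeSet} {t : Fin (k - 2)} :
    Sum.inr (e', t) ∈ powerEdge G k e ↔ e' = e := by
  simp [powerEdge]

lemma powerEdge_eq {e : G.edgeSet} {a b : V} (he : (e : Sym2 V) = s(a, b)) :
    powerEdge G k e = insert (Sum.inl a) (insert (Sum.inl b)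
      ((Finset.univ : Finset (Fin (k - 2))).image (fun t => Sum.inr (e, t)))) := by
  ext v
  cases v with
  | inl i => simp [powerEdge, he, Sym2.mem_iff]
  | inr p => simp [powerEdge, he, eq_comm, Prod.ext_iff]

lemma inl_notMem_insert {a b : V} (hab : a ≠ b) {e : G.edgeSet} :
    (Sum.inl a : V ⊕ (G.edgeSet × Fin (k - 2))) ∉ insert (Sum.inl b)
      ((Finset.univ : Finset (Fin (k - 2))).image (fun t => Sum.inr (e, t))) := by
  simp [hab]

lemma inl_notMem_image {b : V} {e : G.edgeSet} :
    (Sum.inl b : V ⊕ (G.edgeSet × Fin (k - 2))) ∉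
      ((Finset.univ : Finset (Fin (k - 2))).image (fun t => Sum.inr (e, t))) := by
  simp

lemma inr_injective {e : G.edgeSet} :
    Function.Injective (fun t : Fin (k - 2) => (Sum.inr (e, t) : V ⊕ (G.edgeSet × Fin (k - 2)))) := by
  intro t t' h
  simpa [Prod.ext_iff] using h

lemma prod_powerEdge {e : G.edgeSet} {a b : V} (hab : a ≠ b) (he : (e : Sym2 V) = s(a, b))
    (x : V ⊕ (G.edgeSet × Fin (k - 2)) → ℂ) :
    ∏ v ∈ powerEdge G k e, x v
      = x (Sum.inl a) * (x (Sum.inl b) * ∏ t : Fin (k - 2), x (Sum.inr (e, t))) := by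
  rw [powerEdge_eq he, Finset.prod_insert (inl_notMem_insert hab),
    Finset.prod_insert inl_notMem_image, Finset.prod_image (fun t _ t' _ h => inr_injective h)]

lemma prod_powerEdge_erase_inl {e : G.edgeSet} {a b : V} (hab : a ≠ b)
    (he : (e : Sym2 V) = s(a, b)) (x : V ⊕ (G.edgeSet × Fin (k - 2)) → ℂ) :
    ∏ v ∈ (powerEdge G k e).erase (Sum.inl a), x v
      = x (Sum.inl b) * ∏ t : Fin (k - 2), x (Sum.inr (e, t)) := by
  rw [powerEdge_eq he, Finset.erase_insert (inl_notMem_insert hab),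
    Finset.prod_insert inl_notMem_image, Finset.prod_image (fun t _ t' _ h => inr_injective h)]

lemma prod_powerEdge_erase_inr {e : G.edgeSet} {a b : V} (hab : a ≠ b)
    (he : (e : Sym2 V) = s(a, b)) (t₀ : Fin (k - 2)) (x : V ⊕ (G.edgeSet × Fin (k - 2)) → ℂ) :
    ∏ v ∈ (powerEdge G k e).erase (Sum.inr (e, t₀)), x v
      = x (Sum.inl a) * (x (Sum.inl b) * ∏ t ∈ Finset.univ.erase t₀, x (Sum.inr (e, t))) := by
  have h1 : (powerEdge G k e).erase (Sum.inr (e, t₀))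
      = insert (Sum.inl a) (insert (Sum.inl b)
        ((Finset.univ.erase t₀).image (fun t => Sum.inr (e, t)))) := by
    rw [powerEdge_eq he]
    ext v
    rcases v with i | ⟨e', t⟩ <;> simp [Prod.ext_iff] <;> aesop
  rw [h1, Finset.prod_insert (by simp [hab]), Finset.prod_insert (by simp),
    Finset.prod_image (fun t _ t' _ h => inr_injective h)]

lemma powerEdge_injective (hk : 4 ≤ k) : Function.Injective (powerEdge G k) := by
  intro e e' h
  have h0 : Sum.inr (e, (⟨0, by omega⟩ : Fin (k - 2))) ∈ powerEdge G k e' := by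
    rw [← h]; exact mem_powerEdge_inr.2 rfl
  exact mem_powerEdge_inr.1 h0

lemma sum_powerEdges (hk : 4 ≤ k) (i : V ⊕ (G.edgeSet × Fin (k - 2)))
    (F : Finset (V ⊕ (G.edgeSet × Fin (k - 2))) → ℂ) :
    ∑ E ∈ (powerEdges G k).filter (fun E => i ∈ E), F E
      = ∑ e ∈ Finset.univ.filter (fun e => i ∈ powerEdge G k e), F (powerEdge G k e) := by
  rw [powerEdges, Finset.filter_image]
  exact Finset.sum_image (fun e _ e' _ h => powerEdge_injective hk h)

lemma masterB (hk : 4 ≤ k) (x : V ⊕ (G.edgeSet × Fin (k - 2)) → ℂ)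
    (e₀ : G.edgeSet) (t₀ : Fin (k - 2)) :
    ∑ E ∈ (powerEdges G k).filter (fun E => Sum.inr (e₀, t₀) ∈ E),
        ∏ v ∈ E.erase (Sum.inr (e₀, t₀)), x v
      = ∏ v ∈ (powerEdge G k e₀).erase (Sum.inr (e₀, t₀)), x v := by
  rw [sum_powerEdges hk]
  have : Finset.univ.filter (fun e => Sum.inr (e₀, t₀) ∈ powerEdge G k e) = {e₀} := by
    ext e; simp [mem_powerEdge_inr, eq_comm]
  rw [this, Finset.sum_singleton]

lemma masterA (hk : 4 ≤ k) (x : V ⊕ (G.edgeSet × Fin (k - 2)) → ℂ) (a : V) :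
    ∑ E ∈ (powerEdges G k).filter (fun E => Sum.inl a ∈ E), ∏ v ∈ E.erase (Sum.inl a), x v
      = ∑ b : V, (if h : G.Adj a b then
          x (Sum.inl b) * ∏ t : Fin (k - 2), x (Sum.inr (⟨s(a, b), h⟩, t)) else 0) := by
  rw [sum_powerEdges hk]
  rw [show (Finset.univ.filter (fun e : G.edgeSet => Sum.inl a ∈ powerEdge G k e))
      = Finset.univ.filter (fun e : G.edgeSet => a ∈ (e : Sym2 V)) from by
    simp [mem_powerEdge_inl]]
  rw [show (∑ b : V, (if h : G.Adj a b then
        x (Sum.inl b) * ∏ t : Fin (k - 2), x (Sum.inr (⟨s(a, b), h⟩, t)) else 0))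
      = ∑ b ∈ Finset.univ.filter (G.Adj a), (if h : G.Adj a b then
        x (Sum.inl b) * ∏ t : Fin (k - 2), x (Sum.inr (⟨s(a, b), h⟩, t)) else 0) from by
    rw [Finset.sum_filter_of_ne]; intro b _ hb; by_contra hadj; exact hb (dif_neg hadj)]
  refine (Finset.sum_bij (fun b hb => (⟨s(a, b), (Finset.mem_filter.1 hb).2⟩ : G.edgeSet))
    ?_ ?_ ?_ ?_).symm
  · intro b hb
    simp
  · intro b hb b' hb' h
    have h2 := Subtype.ext_iff.1 h
    rw [Sym2.eq, Sym2.rel_iff'] at h2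
    rcases h2 with h2 | h2
    · exact (Prod.ext_iff.1 h2).2
    · exact absurd (Prod.ext_iff.1 h2).2 (Finset.mem_filter.1 hb).2.ne'
  · intro e he
    have ha : a ∈ (e : Sym2 V) := by simpa using he
    obtain ⟨b, hb⟩ := Sym2.mem_iff_exists.1 ha
    have hadj : G.Adj a b := G.mem_edgeSet.1 (by rw [← hb]; exact e.2)
    exact ⟨b, Finset.mem_filter.2 ⟨Finset.mem_univ b, hadj⟩, Subtype.ext hb.symm⟩
  · intro b hb
    have hadj : G.Adj a b := (Finset.mem_filter.1 hb).2
    rw [dif_pos hadj, prod_powerEdge_erase_inl hadj.ne rfl]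

end PowerAux

namespace PowerAux
variable {V : Type*} [Fintype V] [DecidableEq V] {G : SimpleGraph V} [DecidableRel G.Adj] {k : ℕ}

lemma card_powerEdge (hk : 4 ≤ k) (e : G.edgeSet) : (powerEdge G k e).card = k := by
  obtain ⟨a, b, hadj, he⟩ := edge_endpoints e
  rw [powerEdge_eq he, Finset.card_insert_of_notMem (inl_notMem_insert hadj.ne),
    Finset.card_insert_of_notMem inl_notMem_image,
    Finset.card_image_of_injective _ inr_injective, Finset.card_univ, Fintype.card_fin]
  omega

lemma sq_cases {p q : ℂ} (h : p ^ 2 = q ^ 2) : p = q ∨ p = -q := by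
  have h2 : (p - q) * (p + q) = 0 := by linear_combination h
  rcases mul_eq_zero.1 h2 with h3 | h3
  · exact Or.inl (sub_eq_zero.1 h3)
  · exact Or.inr (eq_neg_of_add_eq_zero_left h3)

end PowerAux

namespace PowerAux
variable {V : Type*} [Fintype V] [DecidableEq V] {G : SimpleGraph V} [DecidableRel G.Adj] {k : ℕ}

lemma forward (hk : 4 ≤ k) {lam : ℂ} (hlam : lam ≠ 0)
    {x : V ⊕ (G.edgeSet × Fin (k - 2)) → ℂ} (hx0 : x ≠ 0)
    (hx : ∀ i, lam * x i ^ (k - 1)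
      = ∑ E ∈ (powerEdges G k).filter (fun E => i ∈ E), ∏ v ∈ E.erase i, x v) :
    ∃ (S : Finset V) (E' : Finset (Sym2 V)) (π : Sym2 V → ℂ),
      E' ⊆ G.edgeFinset ∧ (∀ e ∈ E', ∀ v ∈ e, v ∈ S) ∧
      (∀ e ∈ E', π e = 1 ∨ π e = -1) ∧
      ∃ (β : ℂ) (y : ↥S → ℂ), β ^ 2 = lam ^ k ∧ y ≠ 0 ∧
        Matrix.mulVec (Matrix.of fun i j : ↥S =>
          if s((i : V), (j : V)) ∈ E' then π s((i : V), (j : V)) else 0) y = β • y := by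
  classical
  obtain ⟨m, rfl⟩ : ∃ m, k = m + 4 := ⟨k - 4, by omega⟩
  have e1 : m + 4 - 1 = m + 3 := rfl
  set W : G.edgeSet → ℂ := fun e => ∏ v ∈ powerEdge G (m+4) e, x v with hW
  -- added-vertex equation
  have H1 : ∀ (e : G.edgeSet) (t : Fin (m + 4 - 2)),
      lam * x (Sum.inr (e, t)) ^ (m + 4) = W e := by
    intro e t
    have h := hx (Sum.inr (e, t))
    rw [masterB hk x e t] at h
    simp only [e1] at h
    calc lam * x (Sum.inr (e, t)) ^ (m + 4)
        = x (Sum.inr (e, t)) * (lam * x (Sum.inr (e, t)) ^ (m + 3)) := by ring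
      _ = x (Sum.inr (e, t)) * ∏ v ∈ (powerEdge G (m+4) e).erase (Sum.inr (e, t)), x v := by
          rw [h]
      _ = W e := Finset.mul_prod_erase _ _ (mem_powerEdge_inr.2 rfl)
  -- vertex equation
  have H3 : ∀ a : V, lam * x (Sum.inl a) ^ (m + 4)
      = ∑ b : V, (if h : G.Adj a b then W ⟨s(a, b), h⟩ else 0) := by
    intro a
    have h := hx (Sum.inl a)
    rw [masterA hk x a] at h
    simp only [e1] at h
    calc lam * x (Sum.inl a) ^ (m + 4)
        = x (Sum.inl a) * (lam * x (Sum.inl a) ^ (m + 3)) := by ring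
      _ = x (Sum.inl a) * ∑ b : V, (if h : G.Adj a b then
            x (Sum.inl b) * ∏ t : Fin (m + 4 - 2), x (Sum.inr (⟨s(a, b), h⟩, t)) else 0) := by
          rw [h]
      _ = ∑ b : V, (if h : G.Adj a b then W ⟨s(a, b), h⟩ else 0) := by
          rw [Finset.mul_sum]
          refine Finset.sum_congr rfl fun b _ => ?_
          by_cases hadj : G.Adj a b
          · rw [dif_pos hadj, dif_pos hadj]
            exact (prod_powerEdge hadj.ne rfl x).symm
          · rw [dif_neg hadj, dif_neg hadj, mul_zero]
  -- key quadratic identity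
  have H2 : ∀ (e : G.edgeSet) (a b : V), (e : Sym2 V) = s(a, b) → W e ≠ 0 →
      (W e) ^ 2 * lam ^ (m + 2) = x (Sum.inl a) ^ (m + 4) * x (Sum.inl b) ^ (m + 4) := by
    intro e a b he hWe
    have hab : a ≠ b := (G.mem_edgeSet.1 (he ▸ e.2)).ne
    have hfull : W e = x (Sum.inl a) * (x (Sum.inl b) * ∏ t : Fin (m+4-2), x (Sum.inr (e, t))) :=
      prod_powerEdge hab he x
    have hprod : ∏ t : Fin (m + 4 - 2), (lam * x (Sum.inr (e, t)) ^ (m + 4)) = (W e) ^ (m + 2) := by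
      rw [Finset.prod_congr rfl (fun t _ => H1 e t), Finset.prod_const, Finset.card_univ,
        Fintype.card_fin]
      rfl
    have hL : ∏ t : Fin (m + 4 - 2), (lam * x (Sum.inr (e, t)) ^ (m + 4))
        = lam ^ (m + 2) * (∏ t : Fin (m+4-2), x (Sum.inr (e, t))) ^ (m + 4) := by
      rw [Finset.prod_mul_distrib, Finset.prod_const, Finset.card_univ, Fintype.card_fin,
        Finset.prod_pow]
      rfl
    have hE1 : lam ^ (m + 2) * (∏ t : Fin (m+4-2), x (Sum.inr (e, t))) ^ (m + 4) = (W e) ^ (m + 2) := by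
      rw [← hL, hprod]
    have hcancel : (W e) ^ (m + 2) ≠ 0 := pow_ne_zero _ hWe
    refine mul_right_cancel₀ hcancel ?_
    calc (W e) ^ 2 * lam ^ (m + 2) * (W e) ^ (m + 2) = lam ^ (m + 2) * (W e) ^ (m + 4) := by ring
      _ = lam ^ (m+2) * (x (Sum.inl a) ^ (m+4) * (x (Sum.inl b) ^ (m+4)
            * (∏ t : Fin (m+4-2), x (Sum.inr (e, t))) ^ (m+4))) := by rw [hfull]; ring
      _ = (x (Sum.inl a) ^ (m+4) * x (Sum.inl b) ^ (m+4))
            * (lam ^ (m+2) * (∏ t : Fin (m+4-2), x (Sum.inr (e, t))) ^ (m+4)) := by ring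
      _ = x (Sum.inl a) ^ (m+4) * x (Sum.inl b) ^ (m+4) * (W e) ^ (m+2) := by rw [hE1]
  -- square roots
  set s : V → ℂ := fun a => (x (Sum.inl a) ^ (m + 4)) ^ (((2:ℕ) : ℂ)⁻¹) with hsdef
  have hs : ∀ a, s a ^ 2 = x (Sum.inl a) ^ (m + 4) := fun a =>
    Complex.cpow_nat_inv_pow _ two_ne_zero
  set ν : ℂ := ((lam ^ (m + 2))⁻¹) ^ (((2:ℕ) : ℂ)⁻¹) with hνdef
  have hν2 : ν ^ 2 = (lam ^ (m + 2))⁻¹ := Complex.cpow_nat_inv_pow _ two_ne_zero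
  have hν0 : ν ≠ 0 := by
    intro h0
    have h1 : ((lam ^ (m + 2) : ℂ))⁻¹ ≠ 0 := inv_ne_zero (pow_ne_zero _ hlam)
    apply h1; rw [← hν2, h0]; ring
  set Wsym : Sym2 V → ℂ := fun z => if h : z ∈ G.edgeSet then W ⟨z, h⟩ else 0 with hWsym
  set πf : Sym2 V → ℂ := fun z =>
    Wsym z * (ν * Sym2.lift ⟨fun a b => s a * s b, fun a b => mul_comm _ _⟩ z)⁻¹ with hπf
  set E' : Finset (Sym2 V) := G.edgeFinset.filter (fun z => Wsym z ≠ 0) with hE'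
  set S : Finset V := Finset.univ.filter (fun a => ∃ z ∈ E', a ∈ z) with hS
  have hSx : ∀ a ∈ S, x (Sum.inl a) ≠ 0 := by
    intro a ha
    obtain ⟨z, hz, haz⟩ := (Finset.mem_filter.1 ha).2
    obtain ⟨hzE, hz0⟩ := Finset.mem_filter.1 hz
    have hzS : z ∈ G.edgeSet := SimpleGraph.mem_edgeFinset.1 hzE
    have hW0 : W ⟨z, hzS⟩ ≠ 0 := by
      intro h0; apply hz0; rw [hWsym]; simp only; rw [dif_pos hzS]; exact h0
    have hmem : Sum.inl a ∈ powerEdge G (m+4) ⟨z, hzS⟩ := mem_powerEdge_inl.2 haz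
    exact Finset.prod_ne_zero_iff.1 hW0 _ hmem
  have hs0 : ∀ a ∈ S, s a ≠ 0 := by
    intro a ha h0
    have h1 := hs a
    rw [h0] at h1
    apply pow_ne_zero (m+4) (hSx a ha)
    rw [← h1]; norm_num
  have hsign : ∀ z ∈ E', πf z = 1 ∨ πf z = -1 := by
    intro z hz
    obtain ⟨hzE, hz0⟩ := Finset.mem_filter.1 hz
    have hzS : z ∈ G.edgeSet := SimpleGraph.mem_edgeFinset.1 hzE
    obtain ⟨a, b, hadj, hzab⟩ := edge_endpoints (⟨z, hzS⟩ : G.edgeSet)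
    simp only [Subtype.coe_mk] at hzab
    subst hzab
    have haS : a ∈ S := Finset.mem_filter.2 ⟨Finset.mem_univ a, ⟨_, hz, Sym2.mem_mk_left a b⟩⟩
    have hbS : b ∈ S := Finset.mem_filter.2 ⟨Finset.mem_univ b, ⟨_, hz, Sym2.mem_mk_right a b⟩⟩
    have hsa := hs0 a haS; have hsb := hs0 b hbS
    have hWz : Wsym s(a, b) = W ⟨s(a, b), hzS⟩ := by rw [hWsym]; simp only; rw [dif_pos hzS]
    have hW0 : W ⟨s(a, b), hzS⟩ ≠ 0 := by rw [← hWz]; exact hz0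
    have h2 := H2 ⟨s(a, b), hzS⟩ a b rfl hW0
    have hπval : πf s(a, b) = Wsym s(a, b) * (ν * (s a * s b))⁻¹ := by
      rw [hπf]; simp only [Sym2.lift_mk]
    have hD0 : ν * (s a * s b) ≠ 0 := mul_ne_zero hν0 (mul_ne_zero hsa hsb)
    have hD2 : (ν * (s a * s b)) ^ 2 = (W ⟨s(a, b), hzS⟩) ^ 2 := by
      have hlm : (lam : ℂ) ^ (m + 2) ≠ 0 := pow_ne_zero _ hlam
      calc (ν * (s a * s b)) ^ 2 = ν ^ 2 * (s a ^ 2 * s b ^ 2) := by ring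
        _ = (lam ^ (m + 2))⁻¹ * (x (Sum.inl a) ^ (m + 4) * x (Sum.inl b) ^ (m + 4)) := by
            rw [hν2, hs a, hs b]
        _ = (lam ^ (m + 2))⁻¹ * ((W ⟨s(a, b), hzS⟩) ^ 2 * lam ^ (m + 2)) := by rw [h2]
        _ = (W ⟨s(a, b), hzS⟩) ^ 2 := by field_simp
    have hsq : (πf s(a, b)) ^ 2 = 1 := by
      rw [hπval, hWz]
      rw [mul_pow, ← hD2]
      field_simp
    rcases sq_cases (q := 1) (by rw [hsq]; norm_num) with h | h
    · exact Or.inl h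
    · exact Or.inr h
  -- nonemptiness
  have hex : ∃ e : G.edgeSet, W e ≠ 0 := by
    by_contra hno
    push_neg at hno
    apply hx0
    funext i
    show x i = 0
    rcases i with a | ⟨e, t⟩
    · have h3 := H3 a
      have hz : (∑ b : V, if h : G.Adj a b then W ⟨s(a, b), h⟩ else 0) = 0 := by
        refine Finset.sum_eq_zero fun b _ => ?_
        by_cases hadj : G.Adj a b
        · rw [dif_pos hadj]; exact hno _
        · rw [dif_neg hadj]
      rw [hz] at h3
      have := mul_eq_zero.1 h3
      rcases this with h | h
      · exact absurd h hlam
      · exact pow_eq_zero_iff (by omega) |>.1 h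
    · have h1 := H1 e t
      rw [hno e] at h1
      rcases mul_eq_zero.1 h1 with h | h
      · exact absurd h hlam
      · exact pow_eq_zero_iff (by omega) |>.1 h
  obtain ⟨e0, hWe0⟩ := hex
  obtain ⟨a0, b0, hadj0, he0⟩ := edge_endpoints e0
  have he0E' : (e0 : Sym2 V) ∈ E' := by
    refine Finset.mem_filter.2 ⟨SimpleGraph.mem_edgeFinset.2 e0.2, ?_⟩
    rw [hWsym]; simp only; rw [dif_pos e0.2]
    rwa [Subtype.coe_eta]
  have ha0 : a0 ∈ S := Finset.mem_filter.2 ⟨Finset.mem_univ a0, ⟨_, he0E', by rw [he0]; exact Sym2.mem_mk_left a0 b0⟩⟩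
  refine ⟨S, E', πf, Finset.filter_subset _ _, ?_, hsign, lam * ν⁻¹, fun a => s ↑a, ?_, ?_, ?_⟩
  · intro z hz v hv
    exact Finset.mem_filter.2 ⟨Finset.mem_univ v, ⟨z, hz, hv⟩⟩
  · calc (lam * ν⁻¹) ^ 2 = lam ^ 2 * (ν ^ 2)⁻¹ := by ring
      _ = lam ^ 2 * lam ^ (m + 2) := by rw [hν2, inv_inv]
      _ = lam ^ (m + 4) := by ring
  · intro hy0
    have := congrFun hy0 ⟨a0, ha0⟩
    exact hs0 a0 ha0 this
  · funext i
    obtain ⟨a, haS⟩ := i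
    have hxa := hSx a haS
    have hsa := hs0 a haS
    -- the key sum identity
    have key : (∑ b : V, if h : G.Adj a b then W ⟨s(a, b), h⟩ else 0)
        = ∑ b : V, (if s(a, b) ∈ E' then ν * s a * (πf s(a, b) * s b) else 0) := by
      refine Finset.sum_congr rfl fun b _ => ?_
      by_cases hadj : G.Adj a b
      · have hzS : s(a, b) ∈ G.edgeSet := G.mem_edgeSet.2 hadj
        have hWz : Wsym s(a, b) = W ⟨s(a, b), hzS⟩ := by
          rw [hWsym]; simp only; rw [dif_pos hzS]
        rw [dif_pos hadj]
        by_cases hW0 : Wsym s(a, b) = 0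
        · have hnot : s(a, b) ∉ E' := fun hmem => (Finset.mem_filter.1 hmem).2 hW0
          rw [if_neg hnot]
          calc W ⟨s(a, b), hadj⟩ = Wsym s(a, b) := hWz.symm
            _ = 0 := hW0
        · have hbE' : s(a, b) ∈ E' :=
            Finset.mem_filter.2 ⟨SimpleGraph.mem_edgeFinset.2 hzS, hW0⟩
          rw [if_pos hbE']
          have hbS : b ∈ S := Finset.mem_filter.2 ⟨Finset.mem_univ b, ⟨_, hbE', Sym2.mem_mk_right a b⟩⟩
          have hsb := hs0 b hbS
          have hπval : πf s(a, b) = Wsym s(a, b) * (ν * (s a * s b))⁻¹ := by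
            rw [hπf]; simp only [Sym2.lift_mk]
          have hWW : W ⟨s(a, b), hadj⟩ = Wsym s(a, b) := hWz.symm
          rw [hWW, hπval]
          field_simp
      · rw [dif_neg hadj]
        rw [if_neg]
        intro hmem
        exact hadj (G.mem_edgeSet.1 (SimpleGraph.mem_edgeFinset.1 (Finset.mem_filter.1 hmem).1))
    have h3 := H3 a
    rw [key] at h3
    have hsum : (∑ b : V, (if s(a, b) ∈ E' then ν * s a * (πf s(a, b) * s b) else 0))
        = ν * s a * ∑ b : V, (if s(a, b) ∈ E' then πf s(a, b) * s b else 0) := by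
      rw [Finset.mul_sum]
      refine Finset.sum_congr rfl fun b _ => ?_
      by_cases hb : s(a, b) ∈ E'
      · rw [if_pos hb, if_pos hb]
      · rw [if_neg hb, if_neg hb, mul_zero]
    rw [hsum, ← hs a] at h3
    -- matrix entry computation
    show (Matrix.of fun i j : ↥S =>
        if s((i : V), (j : V)) ∈ E' then πf s((i : V), (j : V)) else 0).mulVec (fun a => s ↑a) ⟨a, haS⟩
      = ((lam * ν⁻¹) • fun (a : ↥S) => s ↑a) ⟨a, haS⟩
    have hmv : (Matrix.of fun i j : ↥S =>
        if s((i : V), (j : V)) ∈ E' then πf s((i : V), (j : V)) else 0).mulVec (fun a => s ↑a) ⟨a, haS⟩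
        = ∑ j : ↥S, (if s(a, (j : V)) ∈ E' then πf s(a, (j : V)) else 0) * s ↑j := by
      simp [Matrix.mulVec, dotProduct]
    rw [hmv]
    have hcoe : (∑ j : ↥S, (if s(a, (j : V)) ∈ E' then πf s(a, (j : V)) else 0) * s ↑j)
        = ∑ b ∈ S, (if s(a, b) ∈ E' then πf s(a, b) else 0) * s b :=
      Finset.sum_coe_sort S (fun b => (if s(a, b) ∈ E' then πf s(a, b) else 0) * s b)
    rw [hcoe]
    have hext : (∑ b ∈ S, (if s(a, b) ∈ E' then πf s(a, b) else 0) * s b)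
        = ∑ b : V, (if s(a, b) ∈ E' then πf s(a, b) * s b else 0) := by
      rw [show (∑ b ∈ S, (if s(a, b) ∈ E' then πf s(a, b) else 0) * s b)
          = ∑ b ∈ S, (if s(a, b) ∈ E' then πf s(a, b) * s b else 0) from
        Finset.sum_congr rfl fun b _ => by rw [ite_mul, zero_mul]]
      refine Finset.sum_subset (Finset.subset_univ S) fun b _ hb => ?_
      rw [if_neg]
      intro hmem
      exact hb (Finset.mem_filter.2 ⟨Finset.mem_univ b, ⟨_, hmem, Sym2.mem_mk_right a b⟩⟩)
    rw [hext]
    have hgoal : ν * s a * (∑ b : V, (if s(a, b) ∈ E' then πf s(a, b) * s b else 0))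
        = ν * s a * ((lam * ν⁻¹) * s a) := by
      rw [← h3]
      field_simp
    have := mul_left_cancel₀ (mul_ne_zero hν0 hsa) hgoal
    rw [this]
    simp [smul_eq_mul]

lemma backward (hk : 4 ≤ k) {lam : ℂ} (hlam : lam ≠ 0)
    (S : Finset V) (E' : Finset (Sym2 V)) (π : Sym2 V → ℂ)
    (hE'sub : E' ⊆ G.edgeFinset) (hE'in : ∀ e ∈ E', ∀ v ∈ e, v ∈ S)
    (hπ : ∀ e ∈ E', π e = 1 ∨ π e = -1)
    (β : ℂ) (y : ↥S → ℂ) (hβ2 : β ^ 2 = lam ^ k) (hy0 : y ≠ 0)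
    (hmv : Matrix.mulVec (Matrix.of fun i j : ↥S =>
      if s((i : V), (j : V)) ∈ E' then π s((i : V), (j : V)) else 0) y = β • y) :
    ∃ x : V ⊕ (G.edgeSet × Fin (k - 2)) → ℂ, x ≠ 0 ∧ ∀ i, lam * x i ^ (k - 1)
      = ∑ E ∈ (powerEdges G k).filter (fun E => i ∈ E), ∏ v ∈ E.erase i, x v := by
  classical
  obtain ⟨m, rfl⟩ : ∃ m, k = m + 4 := ⟨k - 4, by omega⟩
  have e1 : m + 4 - 1 = m + 3 := rfl
  have hβ0 : β ≠ 0 := by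
    intro h; rw [h] at hβ2
    exact pow_ne_zero (m+4) hlam (by simpa using hβ2.symm)
  set ya : V → ℂ := fun a => if h : a ∈ S then y ⟨a, h⟩ else 0 with hya
  set xa : V → ℂ := fun a => (ya a ^ 2) ^ (((m + 4 : ℕ) : ℂ)⁻¹) with hxa
  have hxak : ∀ a, xa a ^ (m + 4) = ya a ^ 2 := fun a =>
    Complex.cpow_nat_inv_pow _ (by omega)
  have hxa0 : ∀ a, ya a ≠ 0 → xa a ≠ 0 := fun a h h0 => by
    have h1 := hxak a; rw [h0] at h1
    exact pow_ne_zero 2 h (by simpa using h1.symm)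
  have hxa0' : ∀ a, ya a = 0 → xa a = 0 := by
    intro a h
    have hc : (((m + 4 : ℕ) : ℂ))⁻¹ ≠ 0 := inv_ne_zero (Nat.cast_ne_zero.2 (by omega))
    have hc2 : ¬((m : ℂ) + 4 = 0) := by
      intro h0
      exact Nat.cast_ne_zero.2 (show m + 4 ≠ 0 by omega) (by push_cast; linear_combination h0)
    simp [hxa, h, Complex.zero_cpow hc, hc2]
  set yp : Sym2 V → ℂ := Sym2.lift ⟨fun a b => ya a * ya b, fun a b => mul_comm _ _⟩ with hyp
  set xp : Sym2 V → ℂ := Sym2.lift ⟨fun a b => xa a * xa b, fun a b => mul_comm _ _⟩ with hxp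
  have hxpk : ∀ z : Sym2 V, xp z ^ (m + 4) = yp z ^ 2 := by
    intro z
    induction z using Sym2.ind with
    | _ a b =>
      simp only [hxp, hyp, Sym2.lift_mk]
      rw [mul_pow, hxak, hxak]; ring
  set TT : Sym2 V → ℂ := fun z => π z * (lam * β⁻¹) * yp z with hTT
  have hchoice : ∀ z, z ∈ E' → yp z ≠ 0 → ∃ c ω : ℂ, c ≠ 0 ∧ ω ^ (m + 4) = 1 ∧
      lam * c ^ 2 = xp z * ω ∧ xp z * ω * c ^ (m + 2) = TT z := by
    intro z hz hyp0
    have hxp0 : xp z ≠ 0 := by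
      intro h0
      apply hyp0
      have h1 := hxpk z; rw [h0] at h1
      have h2 : yp z ^ 2 = 0 := by rw [← h1]; exact zero_pow (by omega)
      exact pow_eq_zero_iff two_ne_zero |>.1 h2
    set c0 : ℂ := (xp z * lam⁻¹) ^ (((2 : ℕ) : ℂ)⁻¹) with hc0
    have hc02 : c0 ^ 2 = xp z * lam⁻¹ := Complex.cpow_nat_inv_pow _ two_ne_zero
    have hc00 : c0 ≠ 0 := by
      intro h; rw [h] at hc02
      exact (mul_ne_zero hxp0 (inv_ne_zero hlam)) (by simpa using hc02.symm)
    have hsq : (xp z * c0 ^ (m + 2)) ^ 2 = (TT z) ^ 2 := by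
      have hπz : π z ^ 2 = 1 := by rcases hπ z hz with h | h <;> rw [h] <;> norm_num
      have hβker : β ^ 2 = lam ^ (m + 4) := hβ2
      calc (xp z * c0 ^ (m + 2)) ^ 2 = xp z ^ 2 * (c0 ^ 2) ^ (m + 2) := by ring
        _ = xp z ^ 2 * (xp z * lam⁻¹) ^ (m + 2) := by rw [hc02]
        _ = xp z ^ (m + 4) * (lam⁻¹) ^ (m + 2) := by ring
        _ = yp z ^ 2 * (lam⁻¹) ^ (m + 2) := by rw [hxpk]
        _ = (TT z) ^ 2 := by
            rw [hTT]; simp only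
            rw [mul_pow, mul_pow, hπz, one_mul, mul_pow, inv_pow, inv_pow, hβker]
            field_simp
            ring
    rcases sq_cases hsq with h | h
    · exact ⟨c0, 1, hc00, one_pow _, by rw [mul_one, hc02]; field_simp; try ring,
        by rw [mul_one]; exact h⟩
    · set η : ℂ := Complex.exp (Real.pi * Complex.I / ((m : ℂ) + 4)) with hη
      have hηk : η ^ (m + 4) = -1 := by
        rw [hη, ← Complex.exp_nat_mul]
        rw [show ((m + 4 : ℕ) : ℂ) * (Real.pi * Complex.I / ((m : ℂ) + 4))
            = Real.pi * Complex.I from by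
          have hm0 : ((m : ℂ) + 4) ≠ 0 := by
            intro h0
            exact Nat.cast_ne_zero.2 (show m + 4 ≠ 0 by omega) (by push_cast; linear_combination h0)
          push_cast
          field_simp]
        exact Complex.exp_pi_mul_I
      have hη0 : η ≠ 0 := Complex.exp_ne_zero _
      refine ⟨c0 * η, η ^ 2, mul_ne_zero hc00 hη0, ?_, ?_, ?_⟩
      · rw [← pow_mul, mul_comm 2 (m + 4), pow_mul, hηk]; norm_num
      · rw [mul_pow, hc02]; field_simp; try ring
      · calc xp z * η ^ 2 * (c0 * η) ^ (m + 2)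
            = (xp z * c0 ^ (m + 2)) * η ^ (m + 4) := by ring
          _ = -(xp z * c0 ^ (m + 2)) := by rw [hηk]; ring
          _ = TT z := by rw [h]; ring
  set CW : Sym2 V → ℂ × ℂ := fun z => if h : z ∈ E' ∧ yp z ≠ 0 then
      (Classical.choose (hchoice z h.1 h.2),
       Classical.choose (Classical.choose_spec (hchoice z h.1 h.2))) else (0, 0) with hCW
  have hCWspec : ∀ z (h1 : z ∈ E') (h2 : yp z ≠ 0), (CW z).1 ≠ 0 ∧ (CW z).2 ^ (m + 4) = 1 ∧
      lam * (CW z).1 ^ 2 = xp z * (CW z).2 ∧ xp z * (CW z).2 * (CW z).1 ^ (m + 2) = TT z := by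
    intro z h1 h2
    have hgood : z ∈ E' ∧ yp z ≠ 0 := ⟨h1, h2⟩
    simp only [hCW, dif_pos hgood]
    exact Classical.choose_spec (Classical.choose_spec (hchoice z h1 h2))
  set X : V ⊕ (G.edgeSet × Fin (m + 4 - 2)) → ℂ := Sum.elim xa (fun p =>
    if (↑p.1 : Sym2 V) ∈ E' ∧ yp ↑p.1 ≠ 0 then
      (if (p.2 : ℕ) = 0 then (CW ↑p.1).2 * (CW ↑p.1).1 else (CW ↑p.1).1) else 0) with hX
  have hz0 : ((⟨0, by omega⟩ : Fin (m + 4 - 2)) : ℕ) = 0 := rfl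
  refine ⟨X, ?_, ?_⟩
  · obtain ⟨i0, hi0⟩ := Function.ne_iff.1 hy0
    intro hX0
    apply hi0
    have h1 := congrFun hX0 (Sum.inl ↑i0)
    have h2 : xa ↑i0 = 0 := h1
    have h3 : ya ↑i0 = 0 := by
      by_contra h4
      exact hxa0 _ h4 h2
    rw [hya] at h3
    simp only [dif_pos i0.2, Subtype.coe_eta] at h3
    exact h3
  · intro i
    rcases i with a | ⟨e, t₀⟩
    · -- vertex equation
      rw [masterA hk X a]
      simp only [e1]
      have hXa : X (Sum.inl a) = xa a := rfl
      have hedgeprod : ∀ (b : V) (h : G.Adj a b),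
          (∏ t : Fin (m + 4 - 2), X (Sum.inr (⟨s(a, b), h⟩, t)))
            = if s(a, b) ∈ E' ∧ yp s(a, b) ≠ 0 then
                (CW s(a, b)).2 * (CW s(a, b)).1 ^ (m + 2) else 0 := by
        intro b h
        by_cases hg : s(a, b) ∈ E' ∧ yp s(a, b) ≠ 0
        · rw [if_pos hg]
          rw [← Finset.mul_prod_erase _ _ (Finset.mem_univ (⟨0, by omega⟩ : Fin (m + 4 - 2)))]
          have hv0 : X (Sum.inr (⟨s(a, b), h⟩, (⟨0, by omega⟩ : Fin (m + 4 - 2))))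
              = (CW s(a, b)).2 * (CW s(a, b)).1 := by
            simp only [hX, Sum.elim_inr]
            rw [if_pos hg]
            simp
          have hvals : ∀ t ∈ Finset.univ.erase (⟨0, by omega⟩ : Fin (m + 4 - 2)),
              X (Sum.inr (⟨s(a, b), h⟩, t)) = (CW s(a, b)).1 := by
            intro t ht
            simp only [hX, Sum.elim_inr]
            rw [if_pos hg, if_neg (fun hv => (Finset.mem_erase.1 ht).1 (Fin.ext hv))]
          rw [hv0, Finset.prod_congr rfl hvals, Finset.prod_const,
            Finset.card_erase_of_mem (Finset.mem_univ _), Finset.card_univ, Fintype.card_fin]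
          rw [show m + 4 - 2 - 1 = m + 1 from rfl]
          ring
        · rw [if_neg hg]
          refine Finset.prod_eq_zero (Finset.mem_univ (⟨0, by omega⟩ : Fin (m + 4 - 2))) ?_
          simp only [hX, Sum.elim_inr]
          rw [if_neg hg]
      by_cases hyaa : ya a = 0
      · rw [hXa, hxa0' a hyaa]
        rw [zero_pow (by omega : m + 3 ≠ 0), mul_zero]
        refine (Finset.sum_eq_zero fun b _ => ?_).symm
        by_cases hadj : G.Adj a b
        · rw [dif_pos hadj, hedgeprod b hadj, if_neg, mul_zero]
          intro hg
          apply hg.2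
          simp only [hyp, Sym2.lift_mk, hyaa, zero_mul]
        · rw [dif_neg hadj]
      · have haS : a ∈ S := by
          by_contra h
          exact hyaa (by rw [hya]; simp [h])
        have hyas : ya a = y ⟨a, haS⟩ := by rw [hya]; simp [haS]
        have hxaa : xa a ≠ 0 := hxa0 a hyaa
        rw [hXa]
        refine mul_left_cancel₀ hxaa ?_
        have hstep1 : xa a * ∑ b : V, (if h : G.Adj a b then
            X (Sum.inl b) * ∏ t : Fin (m + 4 - 2), X (Sum.inr (⟨s(a, b), h⟩, t)) else 0)
            = ∑ b : V, (if s(a, b) ∈ E' then π s(a, b) * (lam * β⁻¹) * (ya a * ya b) else 0) := by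
        -- per-term
          rw [Finset.mul_sum]
          refine Finset.sum_congr rfl fun b _ => ?_
          by_cases hadj : G.Adj a b
          · rw [dif_pos hadj, hedgeprod b hadj]
            by_cases hg : s(a, b) ∈ E' ∧ yp s(a, b) ≠ 0
            · rw [if_pos hg, if_pos hg.1]
              obtain ⟨hc0, hωk, hc2, hw⟩ := hCWspec s(a, b) hg.1 hg.2
              have hxpe : xp s(a, b) = xa a * xa b := by simp [hxp]
              have hype : yp s(a, b) = ya a * ya b := by simp [hyp]
              have hTTe : TT s(a, b) = π s(a, b) * (lam * β⁻¹) * (ya a * ya b) := by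
                rw [hTT]; simp only; rw [hype]
              rw [← hTTe, ← hw, hxpe]
              have hXb : X (Sum.inl b) = xa b := rfl
              rw [hXb]
              ring
            · rw [if_neg hg, mul_zero, mul_zero]
              by_cases hE : s(a, b) ∈ E'
              · rw [if_pos hE]
                have hypz : yp s(a, b) = 0 := by
                  by_contra h
                  exact hg ⟨hE, h⟩
                have hyab : ya a * ya b = 0 := by
                  have h5 : yp s(a, b) = ya a * ya b := by simp [hyp]
                  rw [← h5]; exact hypz
                rw [hyab, mul_zero]
              · rw [if_neg hE]
          · rw [dif_neg hadj, mul_zero, if_neg]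
            intro hE
            exact hadj (G.mem_edgeSet.1 (SimpleGraph.mem_edgeFinset.1 (hE'sub hE)))
        rw [hstep1]
        have hstep2 : ∑ b : V, (if s(a, b) ∈ E' then π s(a, b) * (lam * β⁻¹) * (ya a * ya b) else 0)
            = (lam * β⁻¹) * ya a * ∑ b : V, (if s(a, b) ∈ E' then π s(a, b) * ya b else 0) := by
          rw [Finset.mul_sum]
          refine Finset.sum_congr rfl fun b _ => ?_
          by_cases hE : s(a, b) ∈ E'
          · rw [if_pos hE, if_pos hE]; ring
          · rw [if_neg hE, if_neg hE, mul_zero]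
        rw [hstep2]
        have hstep3 : ∑ b : V, (if s(a, b) ∈ E' then π s(a, b) * ya b else 0)
            = ∑ j : ↥S, (if s(a, (j : V)) ∈ E' then π s(a, (j : V)) else 0) * y j := by
          rw [show (∑ j : ↥S, (if s(a, (j : V)) ∈ E' then π s(a, (j : V)) else 0) * y j)
              = ∑ b ∈ S, (if s(a, b) ∈ E' then π s(a, b) * ya b else 0) from ?_]
          · refine (Finset.sum_subset (Finset.subset_univ S) fun b _ hb => ?_).symm
            by_cases hE : s(a, b) ∈ E'
            · rw [if_pos hE]
              have h6 : ya b = 0 := by rw [hya]; simp [hb]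
              rw [h6, mul_zero]
            · rw [if_neg hE]
          · rw [← Finset.sum_coe_sort S (fun b => if s(a, b) ∈ E' then π s(a, b) * ya b else 0)]
            refine Finset.sum_congr rfl fun j _ => ?_
            have h7 : ya ↑j = y j := by rw [hya]; simp only [dif_pos j.2, Subtype.coe_eta]
            rw [h7, ite_mul, zero_mul]
        rw [hstep3]
        have hstep4 : ∑ j : ↥S, (if s(a, (j : V)) ∈ E' then π s(a, (j : V)) else 0) * y j
            = β * y ⟨a, haS⟩ := by
          have h1 := congrFun hmv ⟨a, haS⟩
          have h2 : Matrix.mulVec (Matrix.of fun i j : ↥S =>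
              if s((i : V), (j : V)) ∈ E' then π s((i : V), (j : V)) else 0) y ⟨a, haS⟩
              = ∑ j : ↥S, (if s(a, (j : V)) ∈ E' then π s(a, (j : V)) else 0) * y j := by
            simp [Matrix.mulVec, dotProduct]
          rw [h2] at h1
          rw [h1]
          simp [smul_eq_mul]
        rw [hstep4, ← hyas]
        rw [show xa a * (lam * xa a ^ (m + 3)) = lam * xa a ^ (m + 4) from by ring, hxak]
        field_simp
    · -- added-vertex equation
      rw [masterB hk X e t₀]
      obtain ⟨a, b, hadj, he⟩ := edge_endpoints e
      rw [prod_powerEdge_erase_inr hadj.ne he t₀ X]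
      simp only [e1]
      have hXa : X (Sum.inl a) = xa a := rfl
      have hXb : X (Sum.inl b) = xa b := rfl
      by_cases hg : (↑e : Sym2 V) ∈ E' ∧ yp ↑e ≠ 0
      · obtain ⟨hc0, hωk, hc2, hw⟩ := hCWspec ↑e hg.1 hg.2
        have hω0 : (CW ↑e).2 ≠ 0 := by
          intro h0; rw [h0] at hωk
          rw [zero_pow (by omega : m + 4 ≠ 0)] at hωk
          exact zero_ne_one hωk
        have hxpe : xp ↑e = xa a * xa b := by rw [he]; simp [hxp]
        have hc2' : lam * (CW ↑e).1 ^ 2 = xa a * xa b * (CW ↑e).2 := by rw [← hxpe]; exact hc2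
        by_cases ht0 : (t₀ : ℕ) = 0
        · have hXt : X (Sum.inr (e, t₀)) = (CW ↑e).2 * (CW ↑e).1 := by
            simp only [hX, Sum.elim_inr]
            rw [if_pos hg, if_pos ht0]
          rw [hXt]
          have hvals : ∀ t ∈ Finset.univ.erase t₀,
              X (Sum.inr (e, t)) = (CW ↑e).1 := by
            intro t ht
            simp only [hX, Sum.elim_inr]
            rw [if_pos hg, if_neg (fun hv => (Finset.mem_erase.1 ht).1 (Fin.ext (by rw [hv, ht0])))]
          rw [Finset.prod_congr rfl hvals, Finset.prod_const,
            Finset.card_erase_of_mem (Finset.mem_univ _), Finset.card_univ, Fintype.card_fin]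
          rw [show m + 4 - 2 - 1 = m + 1 from rfl, hXa, hXb]
          linear_combination (((CW ↑e).2) ^ (m + 3) * ((CW ↑e).1) ^ (m + 1)) * hc2'
            + (xa a * xa b * ((CW ↑e).1) ^ (m + 1)) * hωk
        · have hz0mem : (⟨0, by omega⟩ : Fin (m + 4 - 2)) ∈ Finset.univ.erase t₀ := by
            refine Finset.mem_erase.2 ⟨?_, Finset.mem_univ _⟩
            intro h0
            exact ht0 (by rw [← h0])
          have hXt : X (Sum.inr (e, t₀)) = (CW ↑e).1 := by
            simp only [hX, Sum.elim_inr]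
            rw [if_pos hg, if_neg ht0]
          rw [hXt, ← Finset.mul_prod_erase _ _ hz0mem]
          have hv0 : X (Sum.inr (e, (⟨0, by omega⟩ : Fin (m + 4 - 2)))) = (CW ↑e).2 * (CW ↑e).1 := by
            simp only [hX, Sum.elim_inr]
            rw [if_pos hg]
            simp
          rw [hv0]
          have hvals : ∀ t ∈ (Finset.univ.erase t₀).erase (⟨0, by omega⟩ : Fin (m + 4 - 2)),
              X (Sum.inr (e, t)) = (CW ↑e).1 := by
            intro t ht
            simp only [hX, Sum.elim_inr]
            rw [if_pos hg, if_neg (fun hv => (Finset.mem_erase.1 ht).1 (Fin.ext hv))]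
          rw [Finset.prod_congr rfl hvals, Finset.prod_const,
            Finset.card_erase_of_mem hz0mem,
            Finset.card_erase_of_mem (Finset.mem_univ _), Finset.card_univ, Fintype.card_fin]
          rw [show m + 4 - 2 - 1 - 1 = m from rfl, hXa, hXb]
          linear_combination (((CW ↑e).1) ^ (m + 1)) * hc2'
      · have hXt : X (Sum.inr (e, t₀)) = 0 := by
          simp only [hX, Sum.elim_inr]
          rw [if_neg hg]
        rw [hXt, zero_pow (by omega : m + 3 ≠ 0), mul_zero]
        have hne : (Finset.univ.erase t₀ : Finset (Fin (m + 4 - 2))).Nonempty := by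
          rw [← Finset.card_pos, Finset.card_erase_of_mem (Finset.mem_univ _),
            Finset.card_univ, Fintype.card_fin]
          omega
        obtain ⟨t1, ht1⟩ := hne
        have h8 : X (Sum.inr (e, t1)) = 0 := by
          simp only [hX, Sum.elim_inr]
          rw [if_neg hg]
        rw [Finset.prod_eq_zero ht1 h8, mul_zero, mul_zero]

end PowerAux

end

/-- **Theorem (k ≥ 4).** A complex number `lam` is an eigenvalue of the k-power hypergraph
`G^(k)` if and only if some signed subgraph of `G` (with vertex set `S`, edge set `E' ⊆ E(G)`
whose edges lie inside `S`, and sign function `π` on its edges) has an eigenvalue `β` with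
`β² = lam^k`. -/
theorem power_hypergraph_eigenvalue_iff_signed_subgraph
    {V : Type*} [Fintype V] [DecidableEq V] (G : SimpleGraph V) [DecidableRel G.Adj]
    (k : ℕ) (hk : 4 ≤ k) (lam : ℂ) :
    IsHypergraphEigenvalue k (powerEdges G k) lam ↔
      ∃ (S : Finset V) (E' : Finset (Sym2 V)) (π : Sym2 V → ℂ),
        E' ⊆ G.edgeFinset ∧ (∀ e ∈ E', ∀ v ∈ e, v ∈ S) ∧
        (∀ e ∈ E', π e = 1 ∨ π e = -1) ∧
        ∃ (β : ℂ) (y : ↥S → ℂ), β ^ 2 = lam ^ k ∧ y ≠ 0 ∧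
          Matrix.mulVec
            (Matrix.of fun i j : ↥S => if s((i : V), (j : V)) ∈ E' then π s((i : V), (j : V)) else 0)
            y = β • y := by
    classical
  simp only [IsHypergraphEigenvalue, IsHypergraphEigenpair]
  constructor
  · rintro ⟨x, hx0, hx⟩
    by_cases hlam : lam = 0
    · subst hlam
      obtain ⟨i, hi⟩ := Function.ne_iff.1 hx0
      have hV : Nonempty V := by
        rcases i with a | ⟨e, t⟩
        · exact ⟨a⟩
        · obtain ⟨a, _, _, _⟩ := PowerAux.edge_endpoints e
          exact ⟨a⟩
      obtain ⟨v0⟩ := hV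
      refine ⟨{v0}, ∅, fun _ => 1, by simp, by simp, by simp, 0, fun _ => 1, ?_, ?_, ?_⟩
      · rw [zero_pow two_ne_zero, zero_pow (by omega : k ≠ 0)]
      · intro h
        exact one_ne_zero (congrFun h ⟨v0, Finset.mem_singleton_self v0⟩)
      · funext i
        simp [Matrix.mulVec, dotProduct]
    · exact PowerAux.forward hk hlam hx0 hx
  · rintro ⟨S, E', π, hsub, hin, hπ, β, y, hβ2, hy0, hmv⟩
    by_cases hlam : lam = 0
    · subst hlam
      obtain ⟨j, hj⟩ := Function.ne_iff.1 hy0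
      refine ⟨fun i => if i = Sum.inl ↑j then 1 else 0, ?_, ?_⟩
      · intro h
        have h1 := congrFun h (Sum.inl ↑j)
        simp at h1
      · intro i
        rw [zero_mul]
        refine (Finset.sum_eq_zero fun E hE => ?_).symm
        obtain ⟨hEmem, hiE⟩ := Finset.mem_filter.1 hE
        obtain ⟨e, _, rfl⟩ := Finset.mem_image.1 hEmem
        have hcard : 1 < ((powerEdge G k e).erase i).card := by
          rw [Finset.card_erase_of_mem hiE, PowerAux.card_powerEdge hk]
          omega
        obtain ⟨b, hb, hbne⟩ := Finset.exists_mem_ne hcard (Sum.inl ↑j)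
        refine Finset.prod_eq_zero hb ?_
        rw [if_neg hbne]
    · exact PowerAux.backward hk hlam S E' π hsub hin hπ β y hβ2 hy0 hmv
end

section
/- Let G be a finite simple graph, let (β, y) be an eigenpair of some signed induced subgraph of G with β ≠ 0, and let λ be a complex number with λ³ = β². Then λ is an eigenvalue of the 3-power hypergraph G^(3). -/
open Finset

/-!
Take cube roots `t i ^ 3 = y i` (with `t = 0` off `S`). Put `t i ^ 2` on the vertex `i` of
`G^(3)` and `(λ / β) π(ij) t i t j` on the new vertex of the edge `ij`. The equation at a new
vertex then reduces to `λ³ π(ij)² = β²`, and the one at an old vertex `i` is `t i` times the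
signed eigenvalue equation at `i`.
-/

namespace SimpleGraph

variable {V : Type*} [Fintype V] [DecidableEq V] (G : SimpleGraph V) [DecidableRel G.Adj]

theorem sum_edgeSet_filter_mem_eq_sum_neighborFinset {M : Type*} [AddCommMonoid M] (i : V)
    (F : G.edgeSet → M) (g : V → M) (hFg : ∀ j (h : s(i, j) ∈ G.edgeSet), F ⟨s(i, j), h⟩ = g j) :
    ∑ e ∈ univ.filter (fun e : G.edgeSet => i ∈ (e : Sym2 V)), F e =
      ∑ j ∈ G.neighborFinset i, g j := by
  symm
  refine sum_bij (fun j hj => ⟨s(i, j), (G.mem_neighborFinset i j).1 hj⟩) (by simp)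
    (fun _ _ _ _ h => Sym2.congr_right.1 (Subtype.mk.inj h)) ?_
    (fun j hj => (hFg j _).symm)
  rintro ⟨e, he⟩ hie
  simp only [mem_filter, mem_univ, true_and] at hie
  have hspec : s(i, Sym2.Mem.other' hie) = e := Sym2.other_spec' hie
  exact ⟨_, (G.mem_neighborFinset _ _).2 (by rwa [← G.mem_edgeSet, hspec]), Subtype.ext hspec⟩

theorem signedAdjMatrix_mulVec_apply {R : Type*} [NonUnitalNonAssocSemiring R] (S : Finset V)
    (π : Sym2 V → R) (y : S → R) (i : S) :
    Matrix.mulVec (Matrix.of fun i j : S => if G.Adj i j then π s((i : V), (j : V)) else 0) y i =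
      ∑ j ∈ G.neighborFinset i, π s((i : V), j) * (if h : j ∈ S then y ⟨j, h⟩ else 0) := by
  simp only [Matrix.mulVec, dotProduct, Matrix.of_apply, neighborFinset_eq_filter, sum_filter]
  rw [← sum_subset (subset_univ S) (fun j _ hj => by simp [hj]), ← sum_coe_sort S]
  refine sum_congr rfl fun j _ => ?_
  split_ifs <;> simp_all

end SimpleGraph

section PowerHypergraph

variable {V : Type*} [Fintype V] [DecidableEq V] (G : SimpleGraph V) [DecidableRel G.Adj]

theorem inl_mem_powerEdge {k : ℕ} (i : V) (e : G.edgeSet) :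
    Sum.inl i ∈ powerEdge G k e ↔ i ∈ (e : Sym2 V) := by
  simp [powerEdge]

theorem inr_mem_powerEdge {k : ℕ} (f e : G.edgeSet) (t : Fin (k - 2)) :
    Sum.inr (f, t) ∈ powerEdge G k e ↔ f = e := by
  simp [powerEdge]

theorem powerEdge_injective {k : ℕ} (hk : 2 < k) : Function.Injective (powerEdge G k) := by
  intro e f h
  have he : Sum.inr (e, ⟨0, by omega⟩) ∈ powerEdge G k e := (inr_mem_powerEdge G e e _).2 rfl
  rwa [h, inr_mem_powerEdge] at he

theorem sum_filter_mem_powerEdges {M : Type*} [AddCommMonoid M] {k : ℕ} (hk : 2 < k)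
    (w : V ⊕ (G.edgeSet × Fin (k - 2))) (F : Finset (V ⊕ (G.edgeSet × Fin (k - 2))) → M) :
    ∑ E ∈ (powerEdges G k).filter (w ∈ ·), F E =
      ∑ e ∈ univ.filter (w ∈ powerEdge G k ·), F (powerEdge G k e) := by
  rw [powerEdges, filter_image, sum_image fun _ _ _ _ h => powerEdge_injective G hk h]

theorem powerEdge_three_mk {i j : V} (h : s(i, j) ∈ G.edgeSet) :
    powerEdge G 3 ⟨s(i, j), h⟩ = {Sum.inl i, Sum.inl j, Sum.inr (⟨s(i, j), h⟩, 0)} := by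
  ext (a | ⟨f, t⟩)
  · simp [powerEdge]
  · simp [powerEdge, Fin.fin_one_eq_zero t]

theorem isHypergraphEigenpair_powerEdges_three {lam : ℂ} {a : V → ℂ} {b : Sym2 V → ℂ}
    (ha : a ≠ 0)
    (hvertex : ∀ i, lam * a i ^ 2 = ∑ j ∈ G.neighborFinset i, a j * b s(i, j))
    (hedge : ∀ i j, G.Adj i j → lam * b s(i, j) ^ 2 = a i * a j) :
    IsHypergraphEigenpair 3 (powerEdges G 3) lam (Sum.elim a fun p => b p.1) := by
  refine ⟨fun h => ha (funext fun i => congrFun h (Sum.inl i)), ?_⟩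
  rintro (i | ⟨⟨e, he⟩, t⟩) <;> rw [sum_filter_mem_powerEdges G (by norm_num)]
  · simp only [inl_mem_powerEdge, Sum.elim_inl, Nat.add_one_sub_one]
    rw [hvertex, G.sum_edgeSet_filter_mem_eq_sum_neighborFinset]
    intro j hij
    rw [powerEdge_three_mk, erase_insert (by simp [hij.ne]), prod_pair (by simp)]
    rfl
  · induction e using Sym2.ind with
    | _ i j =>
    have hfilter :
        univ.filter (Sum.inr (⟨s(i, j), he⟩, t) ∈ powerEdge G 3 ·) = {⟨s(i, j), he⟩} := by
      ext f
      simp only [mem_filter, mem_univ, true_and, mem_singleton, inr_mem_powerEdge, eq_comm]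
    rw [hfilter, sum_singleton, powerEdge_three_mk, Fin.fin_one_eq_zero t]
    simpa [erase_insert_of_ne, (G.mem_edgeSet.1 he).ne] using hedge i j he

theorem isHypergraphEigenvalue_powerEdges_three_of_signed_eigenvector {β lam : ℂ}
    {σ : Sym2 V → ℂ} {Y : V → ℂ} (hY : Y ≠ 0)
    (hrow : ∀ i, Y i ≠ 0 → ∑ j ∈ G.neighborFinset i, σ s(i, j) * Y j = β * Y i)
    (hsign : ∀ i j, G.Adj i j → Y i ≠ 0 → Y j ≠ 0 → σ s(i, j) ^ 2 = 1)
    (hβ : β ≠ 0) (hlam : lam ^ 3 = β ^ 2) :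
    IsHypergraphEigenvalue 3 (powerEdges G 3) lam := by
  choose t ht using fun i => IsAlgClosed.exists_pow_nat_eq (Y i) (n := 3) (by norm_num)
  have ht0 : ∀ i, t i = 0 ↔ Y i = 0 := fun i => by simp [← ht i]
  let b : Sym2 V → ℂ := Sym2.lift ⟨fun i j => lam / β * σ s(i, j) * t i * t j,
    fun i j => by simp only [Sym2.eq_swap (a := i)]; ring⟩
  refine ⟨_, isHypergraphEigenpair_powerEdges_three G (a := fun i => t i ^ 2) (b := b) ?_ ?_ ?_⟩
  · obtain ⟨i, hi⟩ := Function.ne_iff.1 hY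
    exact Function.ne_iff.2 ⟨i, by simpa [ht0] using hi⟩
  · intro i
    by_cases hi : Y i = 0
    · simp [b, (ht0 i).2 hi]
    calc lam * (t i ^ 2) ^ 2 = lam / β * t i * (β * Y i) := by rw [← ht i]; field_simp
      _ = ∑ j ∈ G.neighborFinset i, t j ^ 2 * b s(i, j) := by
        rw [← hrow i hi, mul_sum]
        refine sum_congr rfl fun j _ => ?_
        simp only [b, Sym2.lift_mk, ← ht j]
        ring
  · intro i j hij
    simp only [b, Sym2.lift_mk]
    by_cases hi : Y i = 0
    · simp [(ht0 i).2 hi]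
    by_cases hj : Y j = 0
    · simp [(ht0 j).2 hj]
    have hσ := hsign i j hij hi hj
    field_simp
    linear_combination (t i ^ 2 * t j ^ 2) * (σ s(i, j) ^ 2 * hlam + β ^ 2 * hσ)

end PowerHypergraph

/-- **Lemma (k = 3 case).** If `(β, y)` is an eigenpair, with `β ≠ 0`, of a signed induced
subgraph of `G` (induced on vertex set `S` with sign function `π`), and `lam³ = β²`, then
`lam` is an eigenvalue of the 3-power hypergraph `G^(3)`. -/
theorem eigenvalue_of_signed_induced_subgraph_eigenpair
    {V : Type*} [Fintype V] [DecidableEq V] (G : SimpleGraph V) [DecidableRel G.Adj]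
    (S : Finset V) (π : Sym2 V → ℂ)
    (hπ : ∀ i j : V, i ∈ S → j ∈ S → G.Adj i j → π s(i, j) = 1 ∨ π s(i, j) = -1)
    (β lam : ℂ) (y : ↥S → ℂ) (hy : y ≠ 0)
    (heig : Matrix.mulVec
        (Matrix.of fun i j : ↥S => if G.Adj ↑i ↑j then π s((i : V), (j : V)) else 0) y
        = β • y)
    (hβ : β ≠ 0) (hlam : lam ^ 3 = β ^ 2) :
    IsHypergraphEigenvalue 3 (powerEdges G 3) lam := by
  set Y : V → ℂ := fun j => if h : j ∈ S then y ⟨j, h⟩ else 0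
  have hYS : ∀ j, Y j ≠ 0 → j ∈ S := fun j hj => by by_contra h; simp [Y, h] at hj
  refine isHypergraphEigenvalue_powerEdges_three_of_signed_eigenvector G (σ := π) (Y := Y)
    ?_ ?_ ?_ hβ hlam
  · obtain ⟨i, hi⟩ := Function.ne_iff.1 hy
    exact Function.ne_iff.2 ⟨i, by simpa [Y] using hi⟩
  · intro i hi
    have hrow : _ = β * y _ := congrFun heig ⟨i, hYS i hi⟩
    rw [G.signedAdjMatrix_mulVec_apply] at hrow
    simpa [Y, hYS i hi] using hrow
  · intro i j hij hi hj
    rcases hπ i j (hYS i hi) (hYS j hj) hij with h | h <;> simp [h]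
end

section
/- Let G be a finite simple graph, let k ≥ 3 be an integer, and let (λ, x) be an eigenpair of the k-power hypergraph G^(k). Then for every edge {i,j} of G, writing x^{N_{{i,j}}} = ∏_{v ∈ N_{{i,j}}} x_v, one has (x^{N_{{i,j}}})^{k−3} · ( λ^{k−2} · (x^{N_{{i,j}}})² − (x_i x_j)^{k−2} ) = 0. In particular, if k = 3 then λ^{k−2}(x^{N_{{i,j}}})² = (x_i x_j)^{k−2}, and if k ≥ 4 then either x^{N_{{i,j}}} = 0 or λ^{k−2}(x^{N_{{i,j}}})² = (x_i x_j)^{k−2}. -/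
open Finset

/-! A new vertex `v` on the edge `{i, j}` lies in exactly one hyperedge, so its eigenvalue equation
reads `λ x_v^(k-1) = x_i x_j ∏_{w ≠ v} x_w`, the product running over the other new vertices `w`
on that edge. Multiplying these `k - 2` equations gives
`λ^(k-2) P^(k-1) = (x_i x_j)^(k-2) P^(k-3)`, since each `x_w` occurs `k - 3` times on the right. -/

namespace Finset

variable {ι : Type*} [DecidableEq ι]

theorem prod_prod_erase_eq_pow {M : Type*} [CommMonoid M] (s : Finset ι) (f : ι → M) :
    ∏ t ∈ s, ∏ t' ∈ s.erase t, f t' = (∏ t ∈ s, f t) ^ (#s - 1) := by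
  rw [prod_comm' (t' := s) (s' := fun t' => s.erase t') (fun t t' => by
    simp only [mem_erase]; tauto), ← prod_pow]
  refine prod_congr rfl fun t ht => ?_
  rw [prod_const, card_erase_of_mem ht]

theorem prod_pow_mul_sub_eq_zero_of_mul_pow_eq_mul_prod_erase {R : Type*} [CommRing R]
    {s : Finset ι} {f : ι → R} {c a : R}
    (hf : ∀ t ∈ s, c * f t ^ (#s + 1) = a * ∏ t' ∈ s.erase t, f t') :
    (∏ t ∈ s, f t) ^ (#s - 1) * (c ^ #s * (∏ t ∈ s, f t) ^ 2 - a ^ #s) = 0 := by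
  have hprod := prod_congr rfl hf
  rw [prod_mul_distrib, prod_mul_distrib, prod_const, prod_const, prod_pow,
    prod_prod_erase_eq_pow] at hprod
  obtain hs | hs := Nat.eq_zero_or_pos #s
  · simp [card_eq_zero.1 hs]
  · obtain ⟨n, hn⟩ : ∃ n, #s = n + 1 := ⟨#s - 1, by omega⟩
    rw [hn] at hprod ⊢
    simp only [Nat.add_sub_cancel] at hprod ⊢
    linear_combination hprod

end Finset

section PowerHypergraph

variable {V : Type*} (G : SimpleGraph V) (k : ℕ)

def newVertexEmbedding (e : G.edgeSet) : Fin (k - 2) ↪ V ⊕ (G.edgeSet × Fin (k - 2)) :=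
  (Function.Embedding.sectR e _).trans Function.Embedding.inr

@[simp]
theorem newVertexEmbedding_apply (e : G.edgeSet) (t : Fin (k - 2)) :
    newVertexEmbedding G k e t = Sum.inr (e, t) :=
  rfl

variable [Fintype V] [DecidableEq V] [DecidableRel G.Adj]

theorem inr_mem_powerEdge_iff {e e' : G.edgeSet} {t : Fin (k - 2)} :
    Sum.inr (e', t) ∈ powerEdge G k e ↔ e' = e := by
  simp [powerEdge, eq_comm]

theorem filter_inr_mem_powerEdges (e : G.edgeSet) (t : Fin (k - 2)) :
    (powerEdges G k).filter (Sum.inr (e, t) ∈ ·) = {powerEdge G k e} := by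
  rw [powerEdges, filter_image, ← image_singleton]
  congr 1
  ext e'
  simp [inr_mem_powerEdge_iff, eq_comm]

theorem powerEdge_mk {i j : V} (h : G.Adj i j) :
    powerEdge G k ⟨s(i, j), h⟩ = insert (Sum.inl i) (insert (Sum.inl j)
      (univ.map (newVertexEmbedding G k ⟨s(i, j), h⟩))) := by
  ext v
  rcases v with a | ⟨e', t⟩
  · simp [powerEdge]
  · simp [powerEdge, eq_comm]

theorem IsHypergraphEigenpair.powerEdges_inr {lam : ℂ} {x : V ⊕ (G.edgeSet × Fin (k - 2)) → ℂ}
    (hpair : IsHypergraphEigenpair k (powerEdges G k) lam x) {i j : V} (h : G.Adj i j)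
    (t : Fin (k - 2)) :
    lam * x (Sum.inr (⟨s(i, j), h⟩, t)) ^ (k - 1) =
      x (Sum.inl i) * x (Sum.inl j) * ∏ t' ∈ univ.erase t, x (Sum.inr (⟨s(i, j), h⟩, t')) := by
  rw [hpair.2, filter_inr_mem_powerEdges, sum_singleton, powerEdge_mk,
    erase_insert_of_ne (by simp), erase_insert_of_ne (by simp),
    ← newVertexEmbedding_apply, ← map_erase,
    prod_insert (by simp [h.ne]), prod_insert (by simp), prod_map, mul_assoc]
  rfl

end PowerHypergraph

/-- If `(lam, x)` is an eigenpair of `G^(k)` (`k ≥ 3`), then for every edge `{i,j}` of `G`,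
writing `P = ∏_{v ∈ N_{ij}} x_v`, one has `P^(k-3) * (lam^(k-2) * P² - (x_i x_j)^(k-2)) = 0`.
In particular, for `k = 3` one has `lam^(k-2) * P² = (x_i x_j)^(k-2)`, and for `k ≥ 4`
either `P = 0` or `lam^(k-2) * P² = (x_i x_j)^(k-2)`. -/
theorem power_hypergraph_eigenpair_edge_equation
    {V : Type*} [Fintype V] [DecidableEq V] (G : SimpleGraph V) [DecidableRel G.Adj]
    (k : ℕ) (hk : 3 ≤ k) (lam : ℂ) (x : V ⊕ (G.edgeSet × Fin (k - 2)) → ℂ)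
    (hpair : IsHypergraphEigenpair k (powerEdges G k) lam x) :
    ∀ (i j : V) (h : G.Adj i j),
      (∏ t : Fin (k - 2), x (Sum.inr (⟨s(i, j), h⟩, t))) ^ (k - 3) *
          (lam ^ (k - 2) * (∏ t : Fin (k - 2), x (Sum.inr (⟨s(i, j), h⟩, t))) ^ 2
            - (x (Sum.inl i) * x (Sum.inl j)) ^ (k - 2)) = 0 ∧
      (k = 3 →
        lam ^ (k - 2) * (∏ t : Fin (k - 2), x (Sum.inr (⟨s(i, j), h⟩, t))) ^ 2
          = (x (Sum.inl i) * x (Sum.inl j)) ^ (k - 2)) ∧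
      (4 ≤ k →
        (∏ t : Fin (k - 2), x (Sum.inr (⟨s(i, j), h⟩, t))) = 0 ∨
        lam ^ (k - 2) * (∏ t : Fin (k - 2), x (Sum.inr (⟨s(i, j), h⟩, t))) ^ 2
          = (x (Sum.inl i) * x (Sum.inl j)) ^ (k - 2)) := by
  intro i j h
  have hedge := Finset.prod_pow_mul_sub_eq_zero_of_mul_pow_eq_mul_prod_erase
    (s := univ) (c := lam) (a := x (Sum.inl i) * x (Sum.inl j))
    (f := fun t : Fin (k - 2) => x (Sum.inr (⟨s(i, j), h⟩, t)))
    fun t _ => by rw [card_fin, ← hpair.powerEdges_inr G k h t]; congr 2; omega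
  rw [card_fin, show k - 2 - 1 = k - 3 by omega] at hedge
  refine ⟨hedge, fun hk3 => ?_, fun hk4 => ?_⟩
  · simpa [hk3, sub_eq_zero] using hedge
  · rcases mul_eq_zero.1 hedge with hP | hP
    · exact Or.inl (pow_eq_zero_iff (by omega) |>.1 hP)
    · exact Or.inr (sub_eq_zero.1 hP)
end

section
/- Let G be a finite simple graph and let (λ, x) be an eigenpair of the 3-power hypergraph G^(3) with λ ≠ 0. Let Ĝ be the subgraph of G induced on the set of vertices i of G with x_i ≠ 0. Then there exists a sign function π on the edges of Ĝ such that the signed graph Ĝ_π has an eigenvalue β with β² = λ³. -/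
open Finset

section Helpers
variable {V : Type*} [Fintype V] [DecidableEq V] (G : SimpleGraph V) [DecidableRel G.Adj]

lemma fin_one_eq (t : Fin (3-2)) : t = 0 := Fin.ext (by have := t.isLt; omega)

lemma mem_powerEdge3 {v} {e : G.edgeSet} : v ∈ powerEdge G 3 e ↔
    ((∃ i, v = Sum.inl i ∧ i ∈ (e : Sym2 V)) ∨ v = Sum.inr (e, (0 : Fin (3-2)))) := by
  simp only [powerEdge, mem_filter, mem_univ, true_and]
  constructor
  · rintro (h | ⟨t, rfl⟩)
    · exact Or.inl h
    · exact Or.inr (by rw [fin_one_eq t])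
  · rintro (h | rfl)
    · exact Or.inl h
    · exact Or.inr ⟨0, rfl⟩

lemma inl_mem_powerEdge3 {i : V} {e : G.edgeSet} :
    Sum.inl i ∈ powerEdge G 3 e ↔ i ∈ (e : Sym2 V) := by
  rw [mem_powerEdge3]; simp

lemma inr_mem_powerEdge3 {e' : G.edgeSet} {t : Fin (3-2)} {e : G.edgeSet} :
    Sum.inr (e', t) ∈ powerEdge G 3 e ↔ e' = e := by
  rw [mem_powerEdge3, fin_one_eq t]; simp

lemma powerEdge3_injective : Function.Injective (powerEdge G 3) := by
  intro e e' h
  have := (inr_mem_powerEdge3 G (e' := e) (t := 0) (e := e)).2 rfl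
  rw [h] at this
  exact (inr_mem_powerEdge3 G).1 this

lemma powerEdge3_eq (e : G.edgeSet) {a b : V} (h : (e : Sym2 V) = s(a,b)) :
    powerEdge G 3 e = {Sum.inl a, Sum.inl b, Sum.inr (e, (0 : Fin (3-2)))} := by
  ext v
  simp only [mem_powerEdge3, h, Sym2.mem_iff, mem_insert, mem_singleton]
  constructor
  · rintro (⟨i, rfl, (rfl|rfl)⟩ | rfl) <;> tauto
  · rintro (rfl | rfl | rfl)
    · exact Or.inl ⟨a, rfl, Or.inl rfl⟩
    · exact Or.inl ⟨b, rfl, Or.inr rfl⟩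
    · exact Or.inr rfl

end Helpers

section Eq1
variable {V : Type*} [Fintype V] [DecidableEq V] (G : SimpleGraph V) [DecidableRel G.Adj]
  {lam : ℂ} {x : V ⊕ (G.edgeSet × Fin (3 - 2)) → ℂ}

lemma sum_powerEdges (u : V ⊕ (G.edgeSet × Fin (3-2))) (f : Finset (V ⊕ (G.edgeSet × Fin (3-2))) → ℂ) :
    ∑ e ∈ (powerEdges G 3).filter (fun e => u ∈ e), f e
      = ∑ e ∈ univ.filter (fun e : G.edgeSet => u ∈ powerEdge G 3 e), f (powerEdge G 3 e) := by
  rw [powerEdges, Finset.filter_image]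
  exact Finset.sum_image (fun a _ b _ h => powerEdge3_injective G h)

lemma edge_eq (hpair : IsHypergraphEigenpair 3 (powerEdges G 3) lam x)
    (e : G.edgeSet) {a b : V} (h : (e : Sym2 V) = s(a,b)) :
    lam * x (Sum.inr (e, 0)) ^ 2 = x (Sum.inl a) * x (Sum.inl b) := by
  have hab : G.Adj a b := G.mem_edgeSet.1 (h ▸ e.prop)
  have key := hpair.2 (Sum.inr (e, 0))
  rw [sum_powerEdges] at key
  have hfil : univ.filter (fun e' : G.edgeSet => Sum.inr (e, (0 : Fin (3-2))) ∈ powerEdge G 3 e')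
      = {e} := by
    ext e'
    rw [mem_filter, inr_mem_powerEdge3, mem_singleton, eq_comm]
    simp
  rw [hfil, Finset.sum_singleton, powerEdge3_eq G e h] at key
  have herase : ({Sum.inl a, Sum.inl b, Sum.inr (e, (0 : Fin (3-2)))} :
      Finset (V ⊕ (G.edgeSet × Fin (3-2)))).erase (Sum.inr (e, 0)) = {Sum.inl a, Sum.inl b} := by
    ext v
    simp only [mem_erase, mem_insert, mem_singleton]
    constructor
    · rintro ⟨hne, (rfl|rfl|rfl)⟩ <;> tauto
    · rintro (rfl|rfl) <;> simp
  rw [herase, Finset.prod_pair (by simpa using hab.ne)] at key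
  simpa using key
end Eq1

section Eq2
variable {V : Type*} [Fintype V] [DecidableEq V] (G : SimpleGraph V) [DecidableRel G.Adj]
  {lam : ℂ} {x : V ⊕ (G.edgeSet × Fin (3 - 2)) → ℂ}

lemma prod_erase_pe (x : V ⊕ (G.edgeSet × Fin (3 - 2)) → ℂ)
    (e : G.edgeSet) {a b : V} (h : (e : Sym2 V) = s(a,b)) :
    ∏ v ∈ (powerEdge G 3 e).erase (Sum.inl a), x v
      = x (Sum.inl b) * x (Sum.inr (e, 0)) := by
  have hab : G.Adj a b := G.mem_edgeSet.1 (h ▸ e.prop)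
  rw [powerEdge3_eq G e h]
  have herase : ({Sum.inl a, Sum.inl b, Sum.inr (e, (0 : Fin (3-2)))} :
      Finset (V ⊕ (G.edgeSet × Fin (3-2)))).erase (Sum.inl a)
      = {Sum.inl b, Sum.inr (e, 0)} := by
    ext v
    simp only [mem_erase, mem_insert, mem_singleton]
    constructor
    · rintro ⟨hne, (rfl|rfl|rfl)⟩ <;> tauto
    · rintro (rfl|rfl) <;> simp [(Ne.symm hab.ne), Sum.inl.injEq]
  rw [herase, Finset.prod_pair (by simp)]

lemma vertex_eq (hpair : IsHypergraphEigenpair 3 (powerEdges G 3) lam x) (i : V) :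
    lam * x (Sum.inl i) ^ 2 =
      ∑ j : V, if h : G.Adj i j then
        x (Sum.inl j) * x (Sum.inr (⟨s(i,j), G.mem_edgeSet.2 h⟩, 0)) else 0 := by
  have key := hpair.2 (Sum.inl i)
  rw [sum_powerEdges] at key
  have hrw : (univ.filter (fun e : G.edgeSet => Sum.inl i ∈ powerEdge G 3 e))
      = univ.filter (fun e : G.edgeSet => i ∈ (e : Sym2 V)) := by
    apply Finset.filter_congr
    intro e _
    rw [inl_mem_powerEdge3]
  rw [hrw] at key
  have hbij : ∑ e ∈ univ.filter (fun e : G.edgeSet => i ∈ (e : Sym2 V)),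
        ∏ v ∈ (powerEdge G 3 e).erase (Sum.inl i), x v
      = ∑ j ∈ univ.filter (fun j => G.Adj i j), (if h : G.Adj i j then
          x (Sum.inl j) * x (Sum.inr (⟨s(i,j), G.mem_edgeSet.2 h⟩, 0)) else 0) := by
    refine Finset.sum_bij' (fun e he => Sym2.Mem.other' ((mem_filter.1 he).2))
      (fun j hj => ⟨s(i,j), G.mem_edgeSet.2 (mem_filter.1 hj).2⟩) ?_ ?_ ?_ ?_ ?_
    · intro e he
      have hm := (mem_filter.1 he).2
      have hsp := Sym2.other_spec' hm
      simp only [mem_filter, mem_univ, true_and]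
      exact G.mem_edgeSet.1 (by rw [hsp]; exact e.prop)
    · intro j hj
      simp [mem_filter]
    · intro e he
      apply Subtype.ext
      exact Sym2.other_spec' ((mem_filter.1 he).2)
    · intro j hj
      have hm : i ∈ (⟨s(i,j), G.mem_edgeSet.2 (mem_filter.1 hj).2⟩ : G.edgeSet).val :=
        Sym2.mem_mk_left i j
      exact Sym2.congr_right.1 (Sym2.other_spec' hm)
    · intro e he
      have hm := (mem_filter.1 he).2
      have hsp := Sym2.other_spec' hm
      have hadj : G.Adj i (Sym2.Mem.other' hm) := G.mem_edgeSet.1 (by rw [hsp]; exact e.prop)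
      rw [dif_pos hadj, prod_erase_pe G x e hsp.symm]
      have he2 : (⟨s(i, Sym2.Mem.other' hm), G.mem_edgeSet.2 hadj⟩ : G.edgeSet) = e :=
        Subtype.ext hsp
      rw [he2]
  rw [hbij] at key
  rw [show ((3:ℕ) - 1) = 2 from rfl] at key
  rw [key]
  apply Finset.sum_subset (Finset.subset_univ _)
  intro j _ hj
  rw [dif_neg]
  simpa using hj
end Eq2

lemma sym2_rep {α : Type*} (z : Sym2 α) : ∃ a b, z = s(a, b) := by
  induction z using Sym2.ind with
  | _ a b => exact ⟨a, b, rfl⟩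


/-- If `(lam, x)` is an eigenpair of `G^(3)` with `lam ≠ 0`, and `Ĝ` is the subgraph of `G`
induced on the support `S = {i : x_i ≠ 0}`, then there is a sign function `π` on the edges of
`Ĝ` such that the signed graph `Ĝ_π` has an eigenvalue `β` with `β² = lam³`. -/
theorem power_hypergraph_eigenpair_to_signed_induced_subgraph
    {V : Type*} [Fintype V] [DecidableEq V] (G : SimpleGraph V) [DecidableRel G.Adj]
    (lam : ℂ) (x : V ⊕ (G.edgeSet × Fin (3 - 2)) → ℂ)
    (hpair : IsHypergraphEigenpair 3 (powerEdges G 3) lam x) (hlam : lam ≠ 0)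
    (S : Finset V) (hS : S = Finset.univ.filter fun i => x (Sum.inl i) ≠ 0) :
    ∃ π : Sym2 V → ℂ,
      (∀ i j : V, i ∈ S → j ∈ S → G.Adj i j → π s(i, j) = 1 ∨ π s(i, j) = -1) ∧
      ∃ (β : ℂ) (y : ↥S → ℂ), β ^ 2 = lam ^ 3 ∧ y ≠ 0 ∧
        Matrix.mulVec
          (Matrix.of fun i j : ↥S => if G.Adj ↑i ↑j then π s((i : V), (j : V)) else 0) y
          = β • y := by
  classical
  -- square roots
  choose σ hσ using fun i : V => IsAlgClosed.exists_pow_nat_eq (x (Sum.inl i)) (n := 2) (by norm_num)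
  obtain ⟨μ, hμ⟩ := IsAlgClosed.exists_pow_nat_eq lam (n := 2) (by norm_num)
  have hμ0 : μ ≠ 0 := by
    intro h; apply hlam; rw [← hμ, h]; ring
  have hxS : ∀ i ∈ S, x (Sum.inl i) ≠ 0 := by
    intro i hi; rw [hS] at hi; exact (mem_filter.1 hi).2
  have hxS' : ∀ i ∉ S, x (Sum.inl i) = 0 := by
    intro i hi
    by_contra h
    exact hi (by rw [hS]; exact mem_filter.2 ⟨mem_univ _, h⟩)
  have hσS : ∀ i ∈ S, σ i ≠ 0 := by
    intro i hi h
    exact hxS i hi (by rw [← hσ i, h]; ring)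
  -- the sign function
  set π : Sym2 V → ℂ := fun q =>
    if h : q ∈ G.edgeSet then
      x (Sum.inr (⟨q, h⟩, 0)) * μ / Sym2.lift ⟨fun a b => σ a * σ b, fun a b => mul_comm _ _⟩ q
    else 0 with hπdef
  have hπval : ∀ (i j : V) (h : G.Adj i j),
      π s(i, j) = x (Sum.inr (⟨s(i, j), G.mem_edgeSet.2 h⟩, 0)) * μ / (σ i * σ j) := by
    intro i j h
    simp only [hπdef]
    rw [dif_pos (G.mem_edgeSet.2 h), Sym2.lift_mk]
  have hedge : ∀ (i j : V) (h : G.Adj i j),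
      lam * x (Sum.inr (⟨s(i, j), G.mem_edgeSet.2 h⟩, 0)) ^ 2 = x (Sum.inl i) * x (Sum.inl j) :=
    fun i j h => edge_eq G hpair ⟨s(i, j), G.mem_edgeSet.2 h⟩ rfl
  refine ⟨π, ?_, lam * μ, fun i => σ i ^ 3, by rw [← hμ]; ring, ?_, ?_⟩
  · -- signs
    intro i j hi hj hadj
    set w := x (Sum.inr (⟨s(i, j), G.mem_edgeSet.2 hadj⟩, 0)) with hw
    have h1 : lam * w ^ 2 = σ i ^ 2 * σ j ^ 2 := by
      rw [hw, hedge i j hadj, hσ i, hσ j]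
    have hsq : π s(i, j) ^ 2 = 1 := by
      rw [hπval i j hadj, ← hw, div_pow,
        div_eq_one_iff_eq (pow_ne_zero 2 (mul_ne_zero (hσS i hi) (hσS j hj)))]
      linear_combination w ^ 2 * hμ + h1
    have hfac : (π s(i, j) - 1) * (π s(i, j) + 1) = 0 := by linear_combination hsq
    rcases mul_eq_zero.1 hfac with h | h
    · exact Or.inl (by linear_combination h)
    · exact Or.inr (by linear_combination h)
  · -- y ≠ 0
    have hne : ∃ i, i ∈ S := by
      obtain ⟨u, hu⟩ := Function.ne_iff.1 hpair.1
      simp only [Pi.zero_apply] at hu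
      match u with
      | Sum.inl i => exact ⟨i, by rw [hS]; exact mem_filter.2 ⟨mem_univ _, hu⟩⟩
      | Sum.inr (e, t) =>
        obtain ⟨a, b, hab⟩ := sym2_rep (e : Sym2 V)
        have he := edge_eq G hpair e hab
        rw [fin_one_eq t] at hu
        have : x (Sum.inl a) * x (Sum.inl b) ≠ 0 := by
          rw [← he]
          exact mul_ne_zero hlam (pow_ne_zero _ hu)
        exact ⟨a, by rw [hS]; exact mem_filter.2 ⟨mem_univ _, fun h => this (by rw [h, zero_mul])⟩⟩
    obtain ⟨i₀, hi₀⟩ := hne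
    intro h0
    have := congrFun h0 ⟨i₀, hi₀⟩
    simp only [Pi.zero_apply] at this
    exact hσS i₀ hi₀ (pow_eq_zero_iff (by norm_num) |>.1 this)
  · -- eigen equation
    funext k
    have hiS : (k : V) ∈ S := k.prop
    have hσk : σ (k : V) ≠ 0 := hσS _ hiS
    have hterm : ∀ j : V,
        (if j ∈ S then ((if G.Adj (k : V) j then π s((k : V), j) else 0) * σ j ^ 3) * σ (k : V)
          else 0)
        = μ * (if h : G.Adj (k : V) j then
            x (Sum.inl j) * x (Sum.inr (⟨s((k : V), j), G.mem_edgeSet.2 h⟩, 0)) else 0) := by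
      intro j
      by_cases hadj : G.Adj (k : V) j
      · by_cases hjS : j ∈ S
        · rw [if_pos hjS, if_pos hadj, dif_pos hadj, hπval _ _ hadj]
          have hxj : x (Sum.inl j) = σ j ^ 2 := (hσ j).symm
          rw [hxj]
          have h1 := hσS j hjS
          field_simp
        · rw [if_neg hjS, dif_pos hadj, hxS' j hjS, zero_mul, mul_zero]
      · rw [dif_neg hadj, mul_zero, if_neg hadj]
        split <;> simp
    have hv := vertex_eq G hpair (k : V)
    have key : (∑ j : ↥S, (if G.Adj (k : V) (j : V) then π s((k : V), (j : V)) else 0) * σ (j : V) ^ 3)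
        * σ (k : V) = (lam * μ * σ (k : V) ^ 3) * σ (k : V) := by
      rw [Finset.sum_mul]
      have e1 : ∑ j : ↥S,
          ((if G.Adj (k : V) (j : V) then π s((k : V), (j : V)) else 0) * σ (j : V) ^ 3) * σ (k : V)
          = ∑ j ∈ S, ((if G.Adj (k : V) j then π s((k : V), j) else 0) * σ j ^ 3) * σ (k : V) :=
        Finset.sum_attach S
          (fun j => ((if G.Adj (k : V) j then π s((k : V), j) else 0) * σ j ^ 3) * σ (k : V))
      rw [e1]
      have e2 : ∑ j ∈ S, ((if G.Adj (k : V) j then π s((k : V), j) else 0) * σ j ^ 3) * σ (k : V)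
          = ∑ j : V, (if j ∈ S then
              ((if G.Adj (k : V) j then π s((k : V), j) else 0) * σ j ^ 3) * σ (k : V) else 0) := by
        rw [Finset.sum_ite_mem, Finset.univ_inter]
      rw [e2]
      calc ∑ j : V, (if j ∈ S then
              ((if G.Adj (k : V) j then π s((k : V), j) else 0) * σ j ^ 3) * σ (k : V) else 0)
          = ∑ j : V, μ * (if h : G.Adj (k : V) j then
              x (Sum.inl j) * x (Sum.inr (⟨s((k : V), j), G.mem_edgeSet.2 h⟩, 0)) else 0) :=
            Finset.sum_congr rfl (fun j _ => hterm j)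
        _ = μ * ∑ j : V, (if h : G.Adj (k : V) j then
              x (Sum.inl j) * x (Sum.inr (⟨s((k : V), j), G.mem_edgeSet.2 h⟩, 0)) else 0) :=
            (Finset.mul_sum _ _ _).symm
        _ = μ * (lam * x (Sum.inl (k : V)) ^ 2) := by rw [← hv]
        _ = (lam * μ * σ (k : V) ^ 3) * σ (k : V) := by
            rw [← hσ (k : V)]; ring
    have := mul_right_cancel₀ hσk key
    simp only [Matrix.mulVec, dotProduct, Matrix.of_apply, Pi.smul_apply, smul_eq_mul]
    exact this
end
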